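/- arXiv:1708.03199 — 12 statements merged into one kernel-verified Lean document; each statement's English description precedes it below -/
import Mathlib

section
/- Let R be a commutative ring, let p be a minimal prime ideal of R, and let U be a quasi-compact open subset of Spec(R) in the Zariski topology such that p ∉ U. Then there exists an element f ∈ R with f ∉ p such that D(f) ∩ U = ∅. -/
/-!
Since `p` is minimal, `R_p` has a single prime ideal, so every `g ∈ p` becomes nilpotent in `R_p`:
some `s ∉ p` makes `s * g` nilpotent, i.e. `D(s) ∩ D(g) = ∅`. A quasi-compact open `U` with
`p ∉ U` is a finite union of basic opens `D(g)` with `g ∈ p`, and the product of the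
corresponding `s` is the required `f`.
-/

open PrimeSpectrum

theorem Ideal.exists_notMem_isNilpotent_mul_of_mem_minimalPrimes {R : Type*} [CommRing R]
    {p : Ideal R} (hp : p ∈ minimalPrimes R) {g : R} (hg : g ∈ p) :
    ∃ s ∉ p, IsNilpotent (s * g) := by
  have := hp.1.1
  obtain ⟨n, hn⟩ : algebraMap R (Localization.AtPrime p) g ∈
      ((⊥ : Ideal R).map (algebraMap R (Localization.AtPrime p))).radical := by
    rw [IsLocalization.AtPrime.radical_map_of_mem_minimalPrimes _ p ⊥ hp]
    exact Ideal.mem_map_of_mem _ hg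
  rw [Ideal.map_bot, Ideal.mem_bot, ← map_pow,
    IsLocalization.map_eq_zero_iff p.primeCompl] at hn
  obtain ⟨⟨s, hs⟩, hsg⟩ := hn
  exact ⟨s, hs, n + 1, by linear_combination (s ^ n * g) * hsg⟩

theorem PrimeSpectrum.exists_notMem_basicOpen_inf_eq_bot {R : Type*} [CommRing R]
    {p : PrimeSpectrum R} (hp : p.asIdeal ∈ minimalPrimes R) {g : R} (hg : g ∈ p.asIdeal) :
    ∃ s ∉ p.asIdeal, basicOpen s ⊓ basicOpen g = ⊥ := by
  obtain ⟨s, hs, hsg⟩ := Ideal.exists_notMem_isNilpotent_mul_of_mem_minimalPrimes hp hg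
  exact ⟨s, hs, by rwa [← basicOpen_mul, basicOpen_eq_bot_iff]⟩

theorem PrimeSpectrum.exists_notMem_forall_basicOpen_inf_eq_bot {R : Type*} [CommRing R]
    {p : PrimeSpectrum R} (hp : p.asIdeal ∈ minimalPrimes R) {t : Finset R}
    (ht : (t : Set R) ⊆ p.asIdeal) :
    ∃ f ∉ p.asIdeal, ∀ g ∈ t, basicOpen f ⊓ basicOpen g = ⊥ := by
  classical
  induction t using Finset.induction_on with
  | empty => exact ⟨1, p.asIdeal.primeCompl.one_mem, by simp⟩
  | insert g t _ ih =>
    rw [Finset.coe_insert, Set.insert_subset_iff] at ht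
    obtain ⟨f, hf, hft⟩ := ih ht.2
    obtain ⟨s, hs, hsg⟩ := exists_notMem_basicOpen_inf_eq_bot hp ht.1
    refine ⟨s * f, p.asIdeal.primeCompl.mul_mem hs hf,
      (Finset.forall_mem_insert _ _ _).mpr ⟨?_, ?_⟩⟩
    · exact eq_bot_mono (inf_le_inf_right _ (basicOpen_mul_le_left s f)) hsg
    · exact fun h hh ↦ eq_bot_mono (inf_le_inf_right _ (basicOpen_mul_le_right s f)) (hft h hh)

/-- Let `R` be a commutative ring, `p` a minimal prime of `R`, and `U` a quasi-compact
Zariski-open subset of `Spec R` with `p ∉ U`. Then there is `f ∈ R \ p` with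
`D(f) ∩ U = ∅`. -/
theorem stmt0 {R : Type*} [CommRing R] (p : PrimeSpectrum R)
    (hp : p.asIdeal ∈ minimalPrimes R) (U : Set (PrimeSpectrum R))
    (hUopen : IsOpen U) (hUcpt : IsCompact U) (hpU : p ∉ U) :
    ∃ f : R, f ∉ p.asIdeal ∧ (PrimeSpectrum.basicOpen f : Set (PrimeSpectrum R)) ∩ U = ∅ := by
  obtain ⟨t, rfl⟩ := isCompact_isOpen_iff.mp ⟨hUcpt, hUopen⟩
  have ht : (t : Set R) ⊆ p.asIdeal := by simpa using hpU
  obtain ⟨f, hf, hft⟩ := exists_notMem_forall_basicOpen_inf_eq_bot hp ht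
  refine ⟨f, hf, Set.eq_empty_of_forall_notMem ?_⟩
  rintro q ⟨hqf, hqt⟩
  obtain ⟨g, hg, hgq⟩ := Set.not_subset.mp hqt
  have : q ∈ basicOpen f ⊓ basicOpen g := ⟨hqf, hgq⟩
  simp [hft g hg] at this
end

section
/- Let R be a commutative ring. The set Min(R) of minimal prime ideals of R, equipped with the subspace topology induced from the Zariski topology on Spec(R), is a Hausdorff and totally disconnected topological space. -/
/-!
An element `f` lies in a minimal prime `p` exactly when `g * f ^ n = 0` for some `g ∉ p`
(since `R_p` has a unique prime, `f` is nilpotent there). Hence, on the minimal primes, the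
closed set `V(f)` is also the union of the basic opens `D(g)` over such `g`, so it is clopen.
Two distinct minimal primes are incomparable, so some `f` lies in one and not the other, and
`V(f)` separates them: the minimal spectrum is totally separated.
-/

lemma Ideal.exists_mul_pow_eq_zero_of_mem_minimalPrimes {R : Type*} [CommRing R]
    {p : Ideal R} (hp : p ∈ minimalPrimes R) {f : R} (hf : f ∈ p) :
    ∃ (n : ℕ) (g : R), g ∉ p ∧ g * f ^ n = 0 := by
  have : p.IsPrime := hp.1.1
  let S := Localization.AtPrime p
  have := Ring.KrullDimLE.of_isLocalization p hp S
  obtain ⟨n, hn⟩ : IsNilpotent (algebraMap R S f) :=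
    Ring.KrullDimLE.isNilpotent_iff_mem_maximalIdeal.mpr
      ((IsLocalization.AtPrime.to_map_mem_maximal_iff S p f).mpr hf)
  rw [← map_pow, ← map_zero (algebraMap R S), IsLocalization.eq_iff_exists p.primeCompl] at hn
  obtain ⟨⟨g, hg⟩, hgf⟩ := hn
  exact ⟨n, g, hg, by simpa using hgf⟩

namespace PrimeSpectrum

variable {R : Type*} [CommRing R]

lemma isClopen_preimage_zeroLocus_singleton_minimalPrimes (f : R) :
    IsClopen
      ((↑) ⁻¹' zeroLocus {f} : Set {p : PrimeSpectrum R // p.asIdeal ∈ minimalPrimes R}) := by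
  refine ⟨(isClosed_zeroLocus _).preimage continuous_subtype_val, ?_⟩
  rw [isOpen_iff_forall_mem_open]
  intro p hp
  have hfp : f ∈ p.1.asIdeal := by simpa using hp
  obtain ⟨n, g, hg, hgf⟩ := Ideal.exists_mul_pow_eq_zero_of_mem_minimalPrimes p.2 hfp
  refine ⟨Subtype.val ⁻¹' (basicOpen g : Set (PrimeSpectrum R)),
    fun q (hgq : g ∉ q.1.asIdeal) ↦ ?_, isOpen_basicOpen.preimage continuous_subtype_val, hg⟩
  rw [Set.mem_preimage, mem_zeroLocus, Set.singleton_subset_iff]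
  have hzero : g * f ^ n ∈ q.1.asIdeal := hgf ▸ q.1.asIdeal.zero_mem
  exact q.1.isPrime.mem_of_pow_mem n ((q.1.isPrime.mem_or_mem hzero).resolve_left hgq)

instance totallySeparatedSpace_minimalPrimes :
    TotallySeparatedSpace {p : PrimeSpectrum R // p.asIdeal ∈ minimalPrimes R} := by
  refine totallySeparatedSpace_iff_exists_isClopen.mpr fun p q hpq ↦ ?_
  have hnle : ¬ p.1.asIdeal ≤ q.1.asIdeal := fun hle ↦
    hpq (Subtype.ext ((isMin_iff.mpr q.2).eq_of_le hle))
  obtain ⟨f, hfp, hfq⟩ := Set.not_subset.mp hnle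
  exact ⟨_, isClopen_preimage_zeroLocus_singleton_minimalPrimes f,
    Set.singleton_subset_iff.mpr hfp, fun h ↦ hfq (Set.singleton_subset_iff.mp h)⟩

end PrimeSpectrum

/-- The minimal spectrum of a commutative ring `R`, with the subspace topology induced
from the Zariski topology on `Spec R`, is Hausdorff and totally disconnected. -/
theorem stmt1 (R : Type*) [CommRing R] :
    T2Space {p : PrimeSpectrum R // p.asIdeal ∈ minimalPrimes R} ∧
      TotallyDisconnectedSpace {p : PrimeSpectrum R // p.asIdeal ∈ minimalPrimes R} :=
  ⟨inferInstance, inferInstance⟩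
end

section
/- Let R be a commutative ring, let m be a maximal ideal of R, and let U be a quasi-compact open subset of Spec(R) in the flat topology such that m ∉ U. Then there exists an element f ∈ m such that V(f) ∩ U = ∅. -/
/-
Flat-open sets are upper sets for inclusion of primes, since each `V(f)` is. As `m ∉ U`, no
`p ∈ U` lies in `m`, so `p ∈ V(g)` for some `g ∉ m`. The sets `V(g)` with `g ∉ m` thus form a
flat-open cover of `U`, directed because `V(g) ∪ V(h) = V(gh)`, and by compactness a single
`V(g)` covers `U`. Since `m` is maximal, `(f, g) = R` for some `f ∈ m`, so `V(f) ∩ V(g) = ∅`.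
-/

/-- The flat (inverse) topology on `Spec R`: the topology generated by the sub-basis
consisting of the sets `V(f) = {p : f ∈ p}` for `f ∈ R`. -/
def flatTopology (R : Type*) [CommRing R] : TopologicalSpace (PrimeSpectrum R) :=
  TopologicalSpace.generateFrom
    {U : Set (PrimeSpectrum R) | ∃ f : R, U = PrimeSpectrum.zeroLocus {f}}

namespace PrimeSpectrum

open Topology

variable {R : Type*} [CommRing R]

theorem isUpperSet_of_isOpen_flatTopology {U : Set (PrimeSpectrum R)}
    (hU : IsOpen[flatTopology R] U) : IsUpperSet U := by
  induction hU with
  | basic s hs =>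
    obtain ⟨f, rfl⟩ := hs
    intro p q hpq hp
    simp only [mem_zeroLocus, Set.singleton_subset_iff, SetLike.mem_coe] at hp ⊢
    exact (asIdeal_le_asIdeal p q).2 hpq hp
  | univ => exact isUpperSet_univ
  | inter _ _ _ _ hs ht => exact hs.inter ht
  | sUnion _ _ hS => exact isUpperSet_sUnion hS

theorem isOpen_flatTopology_zeroLocus_singleton (f : R) :
    IsOpen[flatTopology R] (zeroLocus {f}) :=
  TopologicalSpace.isOpen_generateFrom_of_mem ⟨f, rfl⟩

theorem exists_notMem_subset_zeroLocus_of_isCompact_flatTopology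
    {U : Set (PrimeSpectrum R)} (hUopen : IsOpen[flatTopology R] U)
    (hUcpt : @IsCompact _ (flatTopology R) U) {x : PrimeSpectrum R} (hxU : x ∉ U) :
    ∃ g ∉ x.asIdeal, U ⊆ zeroLocus {g} := by
  -- otherwise instance search supplies the Zariski topology to `elim_directed_cover`
  let := flatTopology R
  have hcover : U ⊆ ⋃ g : {g // g ∉ x.asIdeal}, zeroLocus {g.1} := by
    intro p hp
    have hpx : ¬ p.asIdeal ≤ x.asIdeal := fun hle =>
      hxU (isUpperSet_of_isOpen_flatTopology hUopen ((asIdeal_le_asIdeal p x).1 hle) hp)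
    obtain ⟨g, hgp, hgx⟩ := SetLike.not_le_iff_exists.1 hpx
    exact Set.mem_iUnion.2 ⟨⟨g, hgx⟩, by simpa using hgp⟩
  have hdirected : Directed (· ⊆ ·) fun g : {g // g ∉ x.asIdeal} => zeroLocus {g.1} :=
    fun g h => ⟨⟨g.1 * h.1, x.isPrime.mul_notMem g.2 h.2⟩, by
      simp only [zeroLocus_singleton_mul]
      exact ⟨Set.subset_union_left, Set.subset_union_right⟩⟩
  have : Nonempty {g // g ∉ x.asIdeal} :=
    ⟨⟨1, x.asIdeal.ne_top_iff_one.1 x.isPrime.ne_top⟩⟩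
  obtain ⟨g, hg⟩ := hUcpt.elim_directed_cover _
    (fun g : {g // g ∉ x.asIdeal} => isOpen_flatTopology_zeroLocus_singleton g.1) hcover hdirected
  exact ⟨g.1, g.2, hg⟩

theorem exists_mem_zeroLocus_inter_zeroLocus_eq_empty {m : Ideal R} (hm : m.IsMaximal) {g : R}
    (hg : g ∉ m) : ∃ f ∈ m, zeroLocus {f} ∩ zeroLocus {g} = ∅ := by
  obtain ⟨r, f, hf, hrf⟩ := hm.exists_inv hg
  refine ⟨f, hf, ?_⟩
  have hspan : Ideal.span ({f, g} : Set R) = ⊤ := by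
    rw [Ideal.eq_top_iff_one, ← hrf]
    exact add_mem (Ideal.mul_mem_left _ r (Ideal.subset_span (by simp)))
      (Ideal.subset_span (by simp))
  rw [← zeroLocus_union, Set.singleton_union, ← zeroLocus_span, hspan, Submodule.top_coe,
    zeroLocus_univ]

end PrimeSpectrum

/-- Let `m` be a maximal ideal of `R` and `U` a quasi-compact open subset of `Spec R` in the
flat topology with `m ∉ U`. Then there is `f ∈ m` with `V(f) ∩ U = ∅`. -/
theorem stmt3 {R : Type*} [CommRing R] (m : Ideal R) (hm : m.IsMaximal)
    (U : Set (PrimeSpectrum R))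
    (hUopen : @IsOpen _ (flatTopology R) U) (hUcpt : @IsCompact _ (flatTopology R) U)
    (hmU : (⟨m, hm.isPrime⟩ : PrimeSpectrum R) ∉ U) :
    ∃ f ∈ m, PrimeSpectrum.zeroLocus {f} ∩ U = ∅ := by
  obtain ⟨g, hgm, hUg⟩ :=
    PrimeSpectrum.exists_notMem_subset_zeroLocus_of_isCompact_flatTopology hUopen hUcpt hmU
  obtain ⟨f, hfm, hfg⟩ := PrimeSpectrum.exists_mem_zeroLocus_inter_zeroLocus_eq_empty hm hgm
  exact ⟨f, hfm, Set.subset_empty_iff.1 (hfg ▸ Set.inter_subset_inter_right _ hUg)⟩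
end

section
/- Let R be a commutative ring. The set Max(R) of maximal ideals of R, equipped with the subspace topology induced from the flat topology on Spec(R), is a Hausdorff and totally disconnected topological space. -/
open PrimeSpectrum TopologicalSpace Topology

theorem Ideal.IsMaximal.exists_mem_disjoint_zeroLocus {R : Type*} [CommRing R] {m : Ideal R}
    (hm : m.IsMaximal) {f : R} (hf : f ∉ m) :
    ∃ g ∈ m, Disjoint (zeroLocus {f}) (zeroLocus {g}) := by
  obtain ⟨r, g, hg, hrg⟩ := hm.exists_inv hf
  refine ⟨g, hg, Set.disjoint_left.mpr fun p hfp hgp ↦ p.isPrime.ne_top ?_⟩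
  rw [mem_zeroLocus, Set.singleton_subset_iff] at hfp hgp
  rw [Ideal.eq_top_iff_one, ← hrg]
  exact add_mem (Ideal.mul_mem_left _ r hfp) hgp

namespace flatTopology

variable {R : Type*} [CommRing R]

theorem isOpen_zeroLocus_singleton (f : R) : IsOpen[flatTopology R] (zeroLocus {f}) :=
  isOpen_generateFrom_of_mem ⟨f, rfl⟩

theorem isClopen_maximal_preimage_zeroLocus (f : R) :
    @IsClopen {p : PrimeSpectrum R // p.asIdeal.IsMaximal}
      (induced Subtype.val (flatTopology R)) (Subtype.val ⁻¹' zeroLocus {f}) := by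
  let := flatTopology R
  refine ⟨⟨?_⟩, isOpen_induced (isOpen_zeroLocus_singleton f)⟩
  refine isOpen_iff_forall_mem_open.mpr fun m hfm ↦ ?_
  obtain ⟨g, hgm, hdisj⟩ := m.2.exists_mem_disjoint_zeroLocus (f := f) <| by
    simpa [mem_zeroLocus] using hfm
  exact ⟨Subtype.val ⁻¹' zeroLocus {g}, fun n hgn hfn ↦ hdisj.ne_of_mem hfn hgn rfl,
    isOpen_induced (isOpen_zeroLocus_singleton g), by simpa [mem_zeroLocus] using hgm⟩

theorem totallySeparatedSpace_maximal :
    @TotallySeparatedSpace {p : PrimeSpectrum R // p.asIdeal.IsMaximal}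
      (induced Subtype.val (flatTopology R)) := by
  let : TopologicalSpace {p : PrimeSpectrum R // p.asIdeal.IsMaximal} :=
    induced Subtype.val (flatTopology R)
  refine totallySeparatedSpace_iff_exists_isClopen.mpr fun m n hmn ↦ ?_
  have hle : ¬ m.1.asIdeal ≤ n.1.asIdeal := fun h ↦
    hmn <| Subtype.ext <| PrimeSpectrum.ext <| m.2.eq_of_le n.2.ne_top h
  obtain ⟨f, hfm, hfn⟩ := Set.not_subset.mp hle
  exact ⟨_, isClopen_maximal_preimage_zeroLocus f, by simpa [mem_zeroLocus] using hfm,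
    by simpa [mem_zeroLocus] using hfn⟩

end flatTopology

/-- The maximal spectrum of a commutative ring `R`, with the subspace topology induced from
the flat topology on `Spec R`, is Hausdorff and totally disconnected. -/
theorem stmt4 (R : Type*) [CommRing R] :
    @T2Space {p : PrimeSpectrum R // p.asIdeal.IsMaximal}
      (TopologicalSpace.induced Subtype.val (flatTopology R)) ∧
    @TotallyDisconnectedSpace {p : PrimeSpectrum R // p.asIdeal.IsMaximal}
      (TopologicalSpace.induced Subtype.val (flatTopology R)) :=
  letI : TopologicalSpace {p : PrimeSpectrum R // p.asIdeal.IsMaximal} :=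
    .induced Subtype.val (flatTopology R)
  have := flatTopology.totallySeparatedSpace_maximal (R := R)
  ⟨inferInstance, inferInstance⟩
end

section
/- Let R be a commutative ring and f ∈ R. Then Max(R) ∩ V(f) is a clopen (both closed and open) subset of Max(R), where Max(R) carries the subspace topology induced from the flat topology on Spec(R). -/
open PrimeSpectrum Topology

section

variable {R : Type*} [CommRing R]

theorem flatTopology.isOpen_zeroLocus_singleton_s5 (f : R) :
    IsOpen[flatTopology R] (zeroLocus {f}) :=
  .basic _ ⟨f, rfl⟩

theorem Ideal.IsMaximal.notMem_iff_exists_one_sub_mul_mem {m : Ideal R} (hm : m.IsMaximal)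
    {f : R} : f ∉ m ↔ ∃ g, 1 - f * g ∈ m := by
  constructor
  · intro hf
    obtain ⟨g, i, hi, hgi⟩ := hm.exists_inv hf
    exact ⟨g, by rwa [show 1 - f * g = i by linear_combination -hgi]⟩
  · rintro ⟨g, hg⟩ hf
    have hone : (1 : R) ∈ m := by simpa using m.add_mem hg (m.mul_mem_right g hf)
    exact hm.ne_top ((Ideal.eq_top_iff_one m).mpr hone)

theorem compl_preimage_val_zeroLocus_singleton_maximal (f : R) :
    (Subtype.val ⁻¹' zeroLocus {f} : Set {p : PrimeSpectrum R // p.asIdeal.IsMaximal})ᶜ =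
      Subtype.val ⁻¹' ⋃ g, zeroLocus {1 - f * g} := by
  ext ⟨p, hp⟩
  simpa using hp.notMem_iff_exists_one_sub_mul_mem

end

/-- For a commutative ring `R` and `f ∈ R`, the set `Max(R) ∩ V(f)` is a clopen subset of
`Max(R)` with the subspace topology induced from the flat topology on `Spec R`. -/
theorem stmt5 {R : Type*} [CommRing R] (f : R) :
    @IsClopen {p : PrimeSpectrum R // p.asIdeal.IsMaximal}
      (TopologicalSpace.induced Subtype.val (flatTopology R))
      (Subtype.val ⁻¹' PrimeSpectrum.zeroLocus {f}) := by
  let := flatTopology R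
  refine ⟨?_, (flatTopology.isOpen_zeroLocus_singleton_s5 f).preimage continuous_induced_dom⟩
  rw [← isOpen_compl_iff, compl_preimage_val_zeroLocus_singleton_maximal]
  exact (isOpen_iUnion fun g => flatTopology.isOpen_zeroLocus_singleton_s5 (1 - f * g)).preimage
    continuous_induced_dom
end

section
/- Let φ: R → A be an injective flat ring map between commutative rings with A absolutely flat. Then there exist a commutative ring B, an injective flat ring map ψ: R → B which is an epimorphism of rings, and an injective ring map i: B → A, such that B is absolutely flat and φ = i ∘ ψ. -/
/-!
Every element `a` of the absolutely flat ring `A` has a unique weak inverse `a*`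
(`a² a* = a`, `a*² a = a*`). Take `B` to be the smallest subring of `A` containing `φ R` and
closed under `a ↦ a*`: it is absolutely flat by construction, and `R → B` is an epimorphism
because ring maps preserve weak inverses, which are unique. Every module over an absolutely flat
ring is flat (finitely generated ideals are generated by idempotents), and every prime of such a
ring is minimal, hence lies under a prime of any ring it embeds into; so `A` is faithfully flat
over `B`, and flatness of `A` over `R` descends to `B`.
-/

universe u

open TensorProduct

structure IsWeakInverse {M : Type*} [CommMonoid M] (a b : M) : Prop where
  sq_mul : a ^ 2 * b = a
  sq_mul' : b ^ 2 * a = b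

namespace IsWeakInverse

variable {M : Type*} [CommMonoid M] {a b c : M}

theorem of_eq_sq_mul (h : a = a ^ 2 * b) : IsWeakInverse a (a * b ^ 2) where
  sq_mul := calc
    a ^ 2 * (a * b ^ 2) = (a ^ 2 * b) * (a * b) := by simp only [pow_two]; ac_rfl
    _ = a * (a * b) := by rw [← h]
    _ = a := by rw [← mul_assoc, ← pow_two, ← h]
  sq_mul' := calc
    (a * b ^ 2) ^ 2 * a = (a ^ 2 * b) * (a * b ^ 3) := by
      simp only [pow_succ, pow_zero, one_mul]; ac_rfl
    _ = a * (a * b ^ 3) := by rw [← h]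
    _ = (a ^ 2 * b) * b ^ 2 := by simp only [pow_succ, pow_zero, one_mul]; ac_rfl
    _ = a * b ^ 2 := by rw [← h]

theorem unique (hb : IsWeakInverse a b) (hc : IsWeakInverse a c) : b = c :=
  calc b = b ^ 2 * (a ^ 2 * c) := by rw [hc.sq_mul, hb.sq_mul']
    _ = (a ^ 2 * b) * b * c := by simp only [pow_two]; ac_rfl
    _ = (a ^ 2 * c) * c * b := by rw [hb.sq_mul, hc.sq_mul]; ac_rfl
    _ = c ^ 2 * (a ^ 2 * b) := by simp only [pow_two]; ac_rfl
    _ = c := by rw [hb.sq_mul, hc.sq_mul']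

theorem map {N F : Type*} [CommMonoid N] [FunLike F M N] [MonoidHomClass F M N] (f : F)
    (h : IsWeakInverse a b) : IsWeakInverse (f a) (f b) where
  sq_mul := by rw [← map_pow, ← map_mul, h.sq_mul]
  sq_mul' := by rw [← map_pow, ← map_mul, h.sq_mul']

end IsWeakInverse

def IsAbsolutelyFlat (R : Type*) [CommRing R] : Prop :=
  ∀ a : R, ∃ b, a = a ^ 2 * b

namespace IsAbsolutelyFlat

variable {B : Type*} [CommRing B] (hB : IsAbsolutelyFlat B)
include hB

theorem isIdempotentElem_ideal (I : Ideal B) : IsIdempotentElem I := by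
  refine le_antisymm Ideal.mul_le_right fun a ha => ?_
  obtain ⟨b, hab⟩ := hB a
  rw [hab, pow_two, mul_assoc]
  exact Ideal.mul_mem_mul ha (I.mul_mem_right b ha)

theorem flat (M : Type*) [AddCommGroup M] [Module B M] : Module.Flat B M := by
  rw [Module.Flat.iff_rTensor_injective]
  intro I hI
  obtain ⟨e, he, rfl⟩ := (I.isIdempotentElem_iff_of_fg hI).mp (hB.isIdempotentElem_ideal I)
  -- `B ∙ e` is a direct summand of `B`, with retraction `x ↦ x * e`
  let r : B →ₗ[B] B ∙ e :=
    LinearMap.toSpanSingleton B _ ⟨e, Submodule.mem_span_singleton_self e⟩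
  have hr : r ∘ₗ (B ∙ e).subtype = LinearMap.id := by
    ext ⟨x, hx⟩
    obtain ⟨d, rfl⟩ := Submodule.mem_span_singleton.mp hx
    simp [r, mul_assoc, he.eq]
  refine Function.LeftInverse.injective (g := LinearMap.rTensor M r) fun x => ?_
  rw [← LinearMap.comp_apply, ← LinearMap.rTensor_comp, hr, LinearMap.rTensor_id,
    LinearMap.id_apply]

theorem mem_minimalPrimes (p : Ideal B) [hp : p.IsPrime] : p ∈ minimalPrimes B := by
  rw [minimalPrimes_eq_minimals]
  refine ⟨hp, fun q hq hqp x hx => ?_⟩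
  obtain ⟨b, hxb⟩ := hB x
  have hzero : x * (1 - x * b) ∈ q := by
    rw [mul_sub, mul_one, ← mul_assoc, ← pow_two, ← hxb, sub_self]
    exact q.zero_mem
  refine (hq.mem_or_mem hzero).resolve_right fun h => hp.ne_top ?_
  rw [Ideal.eq_top_iff_one, ← sub_add_cancel 1 (x * b)]
  exact p.add_mem (hqp h) (p.mul_mem_right b hx)

theorem faithfullyFlat {A : Type*} [CommRing A] [Algebra B A]
    (hinj : Function.Injective (algebraMap B A)) : Module.FaithfullyFlat B A := by
  have := hB.flat A
  refine Module.FaithfullyFlat.of_comap_surjective fun p => ?_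
  obtain ⟨P, hP, hPp⟩ :=
    Ideal.exists_comap_eq_of_mem_minimalPrimes_of_injective hinj _ (hB.mem_minimalPrimes p.asIdeal)
  exact ⟨⟨P, hP⟩, PrimeSpectrum.ext hPp⟩

end IsAbsolutelyFlat

theorem Module.Flat.of_faithfullyFlat_of_isScalarTower (R B A : Type*) [CommRing R] [CommRing B]
    [CommRing A] [Algebra R B] [Algebra R A] [Algebra B A] [IsScalarTower R B A]
    [Module.Flat R A] [Module.FaithfullyFlat B A] : Module.Flat R B := by
  rw [Module.Flat.iff_lTensor_preserves_injective_linearMap]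
  intro N Q _ _ _ _ f hf
  change Function.Injective (AlgebraTensorModule.lTensor B B f : B ⊗[R] N → B ⊗[R] Q)
  rw [← Module.FaithfullyFlat.lTensor_injective_iff_injective B A]
  -- after cancelling the base change, this is the injectivity of `A ⊗[R] N → A ⊗[R] Q`
  have hsq := congrArg DFunLike.coe
    (AlgebraTensorModule.lTensor_comp_cancelBaseChange R B A (M := A) f)
  simp only [LinearMap.coe_comp, LinearEquiv.coe_coe, AlgebraTensorModule.coe_lTensor] at hsq
  have h := (Module.Flat.lTensor_preserves_injective_linearMap f hf).comp
    (AlgebraTensorModule.cancelBaseChange R B A A N).injective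
  rw [hsq] at h
  exact h.of_comp

theorem RingHom.Flat.of_comp_of_isAbsolutelyFlat {R B A : Type*} [CommRing R] [CommRing B]
    [CommRing A] {ψ : R →+* B} {i : B →+* A} (hB : IsAbsolutelyFlat B)
    (hi : Function.Injective i) (h : (i.comp ψ).Flat) : ψ.Flat := by
  algebraize [ψ, i, i.comp ψ]
  have := hB.faithfullyFlat hi
  exact Module.Flat.of_faithfullyFlat_of_isScalarTower R B A

section WeakInverseClosure

variable {R A : Type*} [CommRing R] [CommRing A] (φ : R →+* A) (q : A → A)

inductive MemWeakInverseClosure : A → Prop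
  | base (r : R) : MemWeakInverseClosure (φ r)
  | add {a b : A} :
      MemWeakInverseClosure a → MemWeakInverseClosure b → MemWeakInverseClosure (a + b)
  | neg {a : A} : MemWeakInverseClosure a → MemWeakInverseClosure (-a)
  | mul {a b : A} :
      MemWeakInverseClosure a → MemWeakInverseClosure b → MemWeakInverseClosure (a * b)
  | weakInverse {a : A} : MemWeakInverseClosure a → MemWeakInverseClosure (q a)

def weakInverseClosure : Subring A where
  carrier := {a | MemWeakInverseClosure φ q a}
  one_mem' := by simpa using MemWeakInverseClosure.base (q := q) (φ := φ) 1
  zero_mem' := by simpa using MemWeakInverseClosure.base (q := q) (φ := φ) 0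
  add_mem' := .add
  mul_mem' := .mul
  neg_mem' := .neg

def toWeakInverseClosure : R →+* weakInverseClosure φ q :=
  φ.codRestrict _ .base

variable {φ q}

theorem isAbsolutelyFlat_weakInverseClosure (hq : ∀ a, IsWeakInverse a (q a)) :
    IsAbsolutelyFlat (weakInverseClosure φ q) :=
  fun ⟨a, ha⟩ => ⟨⟨q a, .weakInverse ha⟩, Subtype.ext (hq a).sq_mul.symm⟩

theorem weakInverseClosure_ringHom_ext (hq : ∀ a, IsWeakInverse a (q a)) {C : Type*}
    [CommRing C] {g h : weakInverseClosure φ q →+* C}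
    (hgh : g.comp (toWeakInverseClosure φ q) = h.comp (toWeakInverseClosure φ q)) : g = h := by
  ext ⟨a, ha⟩
  induction ha with
  | base r => exact RingHom.congr_fun hgh r
  | @add a b ha hb iha ihb =>
    change g (⟨a, ha⟩ + ⟨b, hb⟩) = h (⟨a, ha⟩ + ⟨b, hb⟩)
    rw [map_add, map_add, iha, ihb]
  | @neg a ha iha =>
    change g (-⟨a, ha⟩) = h (-⟨a, ha⟩)
    rw [map_neg, map_neg, iha]
  | @mul a b ha hb iha ihb =>
    change g (⟨a, ha⟩ * ⟨b, hb⟩) = h (⟨a, ha⟩ * ⟨b, hb⟩)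
    rw [map_mul, map_mul, iha, ihb]
  | @weakInverse a ha iha =>
    have hx : IsWeakInverse (⟨a, ha⟩ : weakInverseClosure φ q) ⟨q a, .weakInverse ha⟩ :=
      ⟨Subtype.ext (hq a).sq_mul, Subtype.ext (hq a).sq_mul'⟩
    exact (hx.map g).unique (iha ▸ hx.map h)

end WeakInverseClosure

/-- Every injective flat ring map `φ : R → A` with `A` absolutely flat factors as an
injective flat ring epimorphism `ψ : R → B` followed by an injective ring map `i : B → A`,
with `B` absolutely flat. -/
theorem stmt9 {R A : Type u} [CommRing R] [CommRing A] (φ : R →+* A)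
    (hinj : Function.Injective φ) (hflat : φ.Flat)
    (hA : ∀ a : A, ∃ b : A, a = a ^ 2 * b) :
    ∃ (B : Type u) (_ : CommRing B) (ψ : R →+* B) (i : B →+* A),
      Function.Injective ψ ∧ ψ.Flat ∧
      (∀ (C : Type u) [CommRing C] (g h : B →+* C), g.comp ψ = h.comp ψ → g = h) ∧
      (∀ b : B, ∃ c : B, b = b ^ 2 * c) ∧
      Function.Injective i ∧
      i.comp ψ = φ := by
  choose b hb using hA
  set q : A → A := fun a => a * b a ^ 2
  have hq (a : A) : IsWeakInverse a (q a) := .of_eq_sq_mul (hb a)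
  have hB := isAbsolutelyFlat_weakInverseClosure (φ := φ) hq
  refine ⟨weakInverseClosure φ q, inferInstance, toWeakInverseClosure φ q,
    (weakInverseClosure φ q).subtype, fun x y hxy => hinj congr(Subtype.val $hxy),
    .of_comp_of_isAbsolutelyFlat (i := (weakInverseClosure φ q).subtype) hB
      Subtype.val_injective hflat,
    fun C _ g h => weakInverseClosure_ringHom_ext hq, hB, Subtype.val_injective, rfl⟩
end

section
/- Let R be a commutative ring such that Min(R) is quasi-compact with respect to the subspace topology induced from the Zariski topology on Spec(R). Then Min(R) is a closed subset of Spec(R) with respect to the patch topology. -/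
/-- The patch (constructible) topology on `Spec R`: the topology generated by the sub-basis
consisting of the sets `D(f) ∩ V(g)` for `f, g ∈ R`. -/
def patchTopology (R : Type*) [CommRing R] : TopologicalSpace (PrimeSpectrum R) :=
  TopologicalSpace.generateFrom
    {U : Set (PrimeSpectrum R) | ∃ f g : R,
      U = (PrimeSpectrum.basicOpen f : Set (PrimeSpectrum R)) ∩ PrimeSpectrum.zeroLocus {g}}

/-!
If `p` is not minimal, choose a minimal prime `q ⊊ p` and `f ∈ p \ q`. Any minimal prime
containing `f` differs from `q`, hence does not contain `q`, so the minimal primes in `V(f)`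
are covered by the sets `D(s)`, `s ∈ q`. This part of `Min(R)` is quasi-compact, so finitely
many `s₁, …, sₙ ∈ q` suffice, and `V(f, s₁, …, sₙ)` is a patch-open neighbourhood of `p`
missing `Min(R)`.
-/

namespace PrimeSpectrum

variable {R : Type*} [CommRing R]

lemma isOpen_zeroLocus_patchTopology {S : Set R} (hS : S.Finite) :
    @IsOpen _ (patchTopology R) (zeroLocus S) := by
  let _ := patchTopology R
  rw [← Set.biUnion_of_singleton S, zeroLocus_iUnion₂]
  exact hS.isOpen_biInter fun g _ => TopologicalSpace.GenerateOpen.basic _ ⟨1, g, by simp⟩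

lemma minimalPrimes_inter_zeroLocus_subset_iUnion_basicOpen {q : Ideal R}
    (hq : q ∈ minimalPrimes R) {f : R} (hf : f ∉ q) :
    {m : PrimeSpectrum R | m.asIdeal ∈ minimalPrimes R} ∩ zeroLocus {f} ⊆
      ⋃ s ∈ (q : Set R), (basicOpen s : Set (PrimeSpectrum R)) := by
  rintro m ⟨hm, hfm⟩
  by_contra hcover
  have hqm : q ≤ m.asIdeal := fun s hs => by
    by_contra hsm
    exact hcover (Set.mem_biUnion hs hsm)
  exact hf (hm.2 ⟨hq.1.1, bot_le⟩ hqm (hfm rfl))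

lemma exists_finite_zeroLocus_disjoint_minimalPrimes
    (hcpt : IsCompact {p : PrimeSpectrum R | p.asIdeal ∈ minimalPrimes R})
    {p : PrimeSpectrum R} (hp : p.asIdeal ∉ minimalPrimes R) :
    ∃ S : Set R, S.Finite ∧ p ∈ zeroLocus S ∧
      Disjoint (zeroLocus S) {m : PrimeSpectrum R | m.asIdeal ∈ minimalPrimes R} := by
  obtain ⟨q, hq, hqp⟩ := Ideal.exists_minimalPrimes_le (bot_le : ⊥ ≤ p.asIdeal)
  have hqp_ne : q ≠ p.asIdeal := fun h => hp (h ▸ hq)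
  obtain ⟨f, hfp, hfq⟩ := SetLike.exists_of_lt (lt_of_le_of_ne hqp hqp_ne)
  obtain ⟨t, htq, ht, hcover⟩ :=
    (hcpt.inter_right (isClosed_zeroLocus {f})).elim_finite_subcover_image
      (fun s _ => isOpen_basicOpen)
      (minimalPrimes_inter_zeroLocus_subset_iUnion_basicOpen hq hfq)
  refine ⟨insert f t, ht.insert f, Set.insert_subset_iff.mpr ⟨hfp, htq.trans hqp⟩, ?_⟩
  refine Set.disjoint_left.mpr fun m hmS hm => ?_
  obtain ⟨s, hst, hsm⟩ :=
    Set.mem_iUnion₂.mp (hcover ⟨hm, Set.singleton_subset_iff.mpr (hmS (Set.mem_insert f t))⟩)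
  exact hsm (hmS (Set.mem_insert_of_mem f hst))

end PrimeSpectrum

open PrimeSpectrum in
/-- If the minimal spectrum of a commutative ring `R` is quasi-compact in the Zariski
topology, then it is a closed subset of `Spec R` with respect to the patch topology. -/
theorem stmt11 {R : Type*} [CommRing R]
    (hcpt : IsCompact {p : PrimeSpectrum R | p.asIdeal ∈ minimalPrimes R}) :
    @IsClosed _ (patchTopology R) {p : PrimeSpectrum R | p.asIdeal ∈ minimalPrimes R} := by
  rw [← @isOpen_compl_iff _ _ (patchTopology R), @isOpen_iff_forall_mem_open _ (patchTopology R)]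
  intro p hp
  obtain ⟨S, hS, hpS, hdisj⟩ := exists_finite_zeroLocus_disjoint_minimalPrimes hcpt hp
  exact ⟨zeroLocus S, hdisj.subset_compl_right, isOpen_zeroLocus_patchTopology hS, hpS⟩
end

section
/- Let R be a commutative ring and let E be a subset of Spec(R). Let π: R → ∏_{p ∈ E} κ(p) be the canonical ring map into the product of the residue fields κ(p) of R at the primes p ∈ E, and let π*: Spec(∏_{p ∈ E} κ(p)) → Spec(R) be the induced map on spectra, q ↦ π⁻¹(q). Then the closure of E in Spec(R) with respect to the patch topology equals the image of π*. -/
/-- The canonical map from `R` to the product of the residue fields `κ(p)` (the fraction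
field of `R/p`) over all primes `p` in a subset `E` of `Spec R`. -/
noncomputable def residueProdMap {R : Type*} [CommRing R] (E : Set (PrimeSpectrum R)) :
    R →+* ∀ p : E, FractionRing (R ⧸ (p : PrimeSpectrum R).asIdeal) :=
  Pi.ringHom fun p =>
    (algebraMap (R ⧸ (p : PrimeSpectrum R).asIdeal)
        (FractionRing (R ⧸ (p : PrimeSpectrum R).asIdeal))).comp
      (Ideal.Quotient.mk (p : PrimeSpectrum R).asIdeal)

/-!
Both sides are described by ultrafilters on `E`. A prime `x` lies in the patch closure of `E`
iff some ultrafilter `U` on `E` converges to it, i.e. `r ∈ x` exactly when `r ∈ p` for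
`U`-almost all `p ∈ E`. On the other side, the primes of a product of fields `∏ᵢ Kᵢ` are exactly
the ideals `{s | sᵢ = 0 for U-almost all i}` for ultrafilters `U` on the index set: whether `s`
lies in an ideal depends only on the zero set of `s`, and the zero sets of the elements of a prime
ideal form an ultrafilter because the indicator functions of `S` and `Sᶜ` multiply to zero.
The preimage under `π` of the ideal attached to `U` is then the limit of `U`.
-/

open Filter Set Topology

theorem mem_closure_range_iff_exists_ultrafilter {X ι : Type*} [TopologicalSpace X]
    {f : ι → X} {x : X} : x ∈ closure (range f) ↔ ∃ U : Ultrafilter ι, Tendsto f U (𝓝 x) := by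
  rw [mem_closure_iff_clusterPt, ← map_top, ← MapClusterPt, mapClusterPt_iff_ultrafilter]
  simp only [le_top, true_and]

theorem tendsto_nhds_patchTopology_iff {R ι : Type*} [CommRing R] {f : ι → PrimeSpectrum R}
    {U : Ultrafilter ι} {x : PrimeSpectrum R} :
    Tendsto f U (@nhds _ (patchTopology R) x) ↔
      ∀ r, r ∈ x.asIdeal ↔ ∀ᶠ i in U, r ∈ (f i).asIdeal := by
  rw [patchTopology, TopologicalSpace.nhds_generateFrom]
  simp only [tendsto_iInf, tendsto_principal, mem_ofPred_eq, and_imp, forall_exists_index]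
  have hmem (y : PrimeSpectrum R) (a b : R) :
      y ∈ (PrimeSpectrum.basicOpen a : Set (PrimeSpectrum R)) ∩ PrimeSpectrum.zeroLocus {b} ↔
        a ∉ y.asIdeal ∧ b ∈ y.asIdeal := by
    simp
  constructor
  · intro h r
    refine ⟨fun hr => ?_, fun hr => ?_⟩
    · filter_upwards [h _ ((hmem x 1 r).2 ⟨x.2.one_notMem, hr⟩) 1 r rfl]
        with i hi using ((hmem _ _ _).1 hi).2
    · by_contra hrx
      obtain ⟨i, hi, hri⟩ :=
        (hr.and (h _ ((hmem x r 0).2 ⟨hrx, zero_mem _⟩) r 0 rfl)).exists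
      exact ((hmem _ _ _).1 hri).1 hi
  · rintro h s hx a b rfl
    rw [hmem] at hx
    filter_upwards [U.eventually_not.2 (mt (h a).2 hx.1), (h b).1 hx.2] with i hai hbi
    exact (hmem _ _ _).2 ⟨hai, hbi⟩

section ProductOfFields

variable {ι : Type*}

def Filter.eventuallyZeroIdeal (l : Filter ι) (K : ι → Type*) [∀ i, Semiring (K i)] :
    Ideal (∀ i, K i) where
  carrier := {s | ∀ᶠ i in l, s i = 0}
  zero_mem' := by simp
  add_mem' ha hb := by filter_upwards [ha, hb] with i hai hbi; simp [hai, hbi]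
  smul_mem' c s hs := by filter_upwards [hs] with i hi; simp [hi]

@[simp]
theorem Filter.mem_eventuallyZeroIdeal {l : Filter ι} {K : ι → Type*} [∀ i, Semiring (K i)]
    {s : ∀ i, K i} : s ∈ l.eventuallyZeroIdeal K ↔ ∀ᶠ i in l, s i = 0 :=
  Iff.rfl

theorem Ultrafilter.isPrime_eventuallyZeroIdeal (U : Ultrafilter ι) (K : ι → Type*)
    [∀ i, Semiring (K i)] [∀ i, Nontrivial (K i)] [∀ i, NoZeroDivisors (K i)] :
    (U : Filter ι).eventuallyZeroIdeal K |>.IsPrime := by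
  refine ⟨fun h => ?_, fun {a b} hab => ?_⟩
  · obtain ⟨i, hi⟩ := ((Ideal.eq_top_iff_one _).1 h).exists
    exact one_ne_zero hi
  · exact U.eventually_or.1 (hab.mono fun i hi => mul_eq_zero.1 hi)

variable {K : ι → Type*} [∀ i, Field (K i)]

def Ideal.zeroSetFilter (I : Ideal (∀ i, K i)) : Filter ι where
  sets := {S | ∃ s ∈ I, {i | s i = 0} ⊆ S}
  univ_sets := ⟨0, I.zero_mem, subset_univ _⟩
  sets_of_superset := fun ⟨s, hs, hsS⟩ hST => ⟨s, hs, hsS.trans hST⟩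
  inter_sets := by
    rintro S T ⟨s, hs, hsS⟩ ⟨t, ht, htT⟩
    -- `s + t * (1 - s * s⁻¹)` vanishes exactly where both `s` and `t` do.
    refine ⟨s + t * (1 - s * s⁻¹), I.add_mem hs (I.mul_mem_right _ ht), fun i hi => ?_⟩
    have hsti : s i = 0 ∧ t i = 0 := by
      by_cases hsi : s i = 0 <;> simp_all
    exact ⟨hsS hsti.1, htT hsti.2⟩

theorem Ideal.mem_iff_mem_zeroSetFilter {I : Ideal (∀ i, K i)} {s : ∀ i, K i} :
    s ∈ I ↔ {i | s i = 0} ∈ I.zeroSetFilter := by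
  refine ⟨fun hs => ⟨s, hs, subset_rfl⟩, fun ⟨t, ht, hts⟩ => ?_⟩
  have hst : s = s * t⁻¹ * t := by
    funext i
    by_cases hti : t i = 0
    · have hsi : s i = 0 := hts hti
      simp [hti, hsi]
    · simp [hti]
  rw [hst]
  exact I.mul_mem_left _ ht

theorem Ideal.eq_eventuallyZeroIdeal_zeroSetFilter (I : Ideal (∀ i, K i)) :
    I = I.zeroSetFilter.eventuallyZeroIdeal K :=
  Ideal.ext fun _ => I.mem_iff_mem_zeroSetFilter

theorem Ideal.zeroSetFilter_neBot {I : Ideal (∀ i, K i)} (hI : I ≠ ⊤) :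
    I.zeroSetFilter.NeBot := by
  refine ⟨fun h => hI ?_⟩
  obtain ⟨s, hs, hs0⟩ : ∅ ∈ I.zeroSetFilter := h ▸ Filter.mem_bot
  have hunit : s * s⁻¹ = 1 := funext fun i => mul_inv_cancel₀ fun hi => hs0 hi
  exact I.eq_top_of_isUnit_mem hs (.of_mul_eq_one _ hunit)

theorem Ideal.IsPrime.compl_notMem_zeroSetFilter_iff {Q : Ideal (∀ i, K i)} (hQ : Q.IsPrime)
    (S : Set ι) : Sᶜ ∉ Q.zeroSetFilter ↔ S ∈ Q.zeroSetFilter := by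
  classical
  have := zeroSetFilter_neBot hQ.ne_top
  refine ⟨fun hS => ?_, compl_notMem⟩
  have hzero : {i | S.piecewise (0 : ∀ i, K i) 1 i = 0} = S := by
    ext i
    by_cases hi : i ∈ S <;> simp [hi]
  have hone : {i | S.piecewise (1 : ∀ i, K i) 0 i = 0} = Sᶜ := by
    ext i
    by_cases hi : i ∈ S <;> simp [hi]
  have hprod : S.piecewise (0 : ∀ i, K i) 1 * S.piecewise (1 : ∀ i, K i) 0 ∈ Q := by
    convert Q.zero_mem
    funext i
    by_cases hi : i ∈ S <;> simp [hi]
  rcases hQ.mem_or_mem hprod with h | h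
  · rwa [mem_iff_mem_zeroSetFilter, hzero] at h
  · rw [mem_iff_mem_zeroSetFilter, hone] at h
    exact absurd h hS

theorem Ideal.IsPrime.exists_ultrafilter_eq_eventuallyZeroIdeal {Q : Ideal (∀ i, K i)}
    (hQ : Q.IsPrime) : ∃ U : Ultrafilter ι, Q = (U : Filter ι).eventuallyZeroIdeal K :=
  ⟨.ofComplNotMemIff _ hQ.compl_notMem_zeroSetFilter_iff, Q.eq_eventuallyZeroIdeal_zeroSetFilter⟩

end ProductOfFields

theorem residueProdMap_apply_eq_zero_iff {R : Type*} [CommRing R] {E : Set (PrimeSpectrum R)}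
    {r : R} {p : E} : residueProdMap E r p = 0 ↔ r ∈ (p : PrimeSpectrum R).asIdeal := by
  show algebraMap (R ⧸ p.1.asIdeal) (FractionRing (R ⧸ p.1.asIdeal)) (Ideal.Quotient.mk _ r) = 0
    ↔ _
  rw [IsFractionRing.to_map_eq_zero_iff, Ideal.Quotient.eq_zero_iff_mem]

theorem mem_comap_residueProdMap_eventuallyZeroIdeal {R : Type*} [CommRing R]
    {E : Set (PrimeSpectrum R)} (l : Filter E) (r : R) :
    r ∈ (l.eventuallyZeroIdeal _).comap (residueProdMap E) ↔
      ∀ᶠ p in l, r ∈ p.1.asIdeal := by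
  simp [residueProdMap_apply_eq_zero_iff]

/-- For a subset `E` of `Spec R`, the closure of `E` in the patch topology equals the image
of the map on spectra induced by the canonical map `π : R → ∏_{p ∈ E} κ(p)`. -/
theorem stmt12 {R : Type*} [CommRing R] (E : Set (PrimeSpectrum R)) :
    @closure _ (patchTopology R) E =
      Set.range (PrimeSpectrum.comap (residueProdMap E)) := by
  let := patchTopology R
  ext x
  conv_lhs => rw [← Subtype.range_coe (s := E), mem_closure_range_iff_exists_ultrafilter]
  simp only [tendsto_nhds_patchTopology_iff]
  constructor
  · rintro ⟨U, hU⟩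
    refine ⟨⟨(U : Filter E).eventuallyZeroIdeal _, U.isPrime_eventuallyZeroIdeal _⟩, ?_⟩
    ext r
    exact (mem_comap_residueProdMap_eventuallyZeroIdeal _ r).trans (hU r).symm
  · rintro ⟨Q, rfl⟩
    obtain ⟨U, hQ⟩ := Q.2.exists_ultrafilter_eq_eventuallyZeroIdeal
    refine ⟨U, fun r => ?_⟩
    rw [PrimeSpectrum.comap_asIdeal, hQ, mem_comap_residueProdMap_eventuallyZeroIdeal]
end

section
/- Let R be a reduced commutative ring such that Min(R) is quasi-compact with respect to the subspace topology induced from the Zariski topology on Spec(R). Then the canonical ring map π: R → ∏_{p ∈ Min(R)} R_p into the product of the localizations of R at its minimal primes is injective and flat; moreover, for each minimal prime p of R the localization R_p is a field. -/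
/-! At a minimal prime `p` of a reduced ring, `R_p` is reduced of dimension zero, hence a field.
So every element of `p` is killed by an element outside `p`, and an element vanishing in every
`R_p` lies in every minimal prime, hence is nilpotent.

Flatness is checked with the equational criterion. Given `f : ι → R`, a relation
`∑ fᵢ xᵢ = 0` over `R_p` is generated by the Koszul syzygies `f_k e_j - f_j e_k` when some
`fᵢ ∉ p` (that `fᵢ` is a unit in `R_p`), and otherwise by the syzygies `b e_k` for any `b ∉ p`
annihilating all the `fᵢ`. The minimal primes containing all the `fᵢ` form a closed, hence
compact, subset of `Min(R)`, so finitely many such `b` serve every `p` at once; one finite set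
of syzygies then trivializes relations in all the `R_p` simultaneously, hence in their product.
-/

section

variable {R : Type*} [CommRing R]

universe v in
theorem Module.Flat.pi_of_forall_exists_syzygies {J : Type*} {M : J → Type*}
    [∀ j, AddCommGroup (M j)] [∀ j, Module R (M j)]
    (h : ∀ {l : ℕ} (f : Fin l → R), ∃ (κ : Type v) (_ : Fintype κ) (a : Fin l → κ → R),
      (∀ c, ∑ i, f i * a i c = 0) ∧ ∀ j (x : Fin l → M j), ∑ i, f i • x i = 0 →
        ∃ y : κ → M j, ∀ i, x i = ∑ c, a i c • y c) :
    Module.Flat R (∀ j, M j) := by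
  refine Module.Flat.of_forall_isTrivialRelation fun {l f x} hx ↦ ?_
  obtain ⟨κ, _, a, ha, hxa⟩ := h f
  choose y hy using fun j ↦ hxa j (fun i ↦ x i j) (by simpa using congrFun hx j)
  let e := Fintype.equivFin κ
  refine ⟨Fintype.card κ, fun i c ↦ a i (e.symm c), fun c j ↦ y j (e.symm c),
    fun i ↦ funext fun j ↦ ?_, fun c ↦ ha _⟩
  simpa [hy j i] using (e.symm.sum_comp fun c ↦ a i c • y j c).symm

section Syzygies

variable {ι : Type*} [Fintype ι] [DecidableEq ι]

def koszulSyzygies (f : ι → R) (i : ι) (c : ι × ι) : R :=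
  (if i = c.1 then f c.2 else 0) - (if i = c.2 then f c.1 else 0)

def annihilatorSyzygies (B : Finset R) (i : ι) (c : ι × B) : R :=
  if i = c.1 then c.2 else 0

theorem sum_mul_koszulSyzygies (f : ι → R) (c : ι × ι) :
    ∑ i, f i * koszulSyzygies f i c = 0 := by
  simp [koszulSyzygies, mul_sub, mul_comm]

theorem sum_mul_annihilatorSyzygies {f : ι → R} {B : Finset R}
    (hB : ∀ b ∈ B, ∀ i, b * f i = 0) (c : ι × B) :
    ∑ i, f i * annihilatorSyzygies B i c = 0 := by
  simp [annihilatorSyzygies, mul_comm, hB _ c.2.2]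

variable {A : Type*} [CommRing A] [Algebra R A]

theorem exists_eq_sum_koszulSyzygies_smul {f : ι → R} {x : ι → A} (hx : ∑ i, f i • x i = 0)
    {i₀ : ι} (hu : IsUnit (algebraMap R A (f i₀))) :
    ∃ y : ι × ι → A, ∀ i, x i = ∑ c, koszulSyzygies f i c • y c := by
  obtain ⟨v, hv⟩ := hu.exists_right_inv
  refine ⟨fun c ↦ if c.2 = i₀ then v * x c.1 else 0, fun i ↦ ?_⟩
  have hvx : ∑ j, f j • (v * x j) = 0 := by
    simp_rw [← mul_smul_comm, ← Finset.mul_sum, hx, mul_zero]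
  have hxi : f i₀ • (v * x i) = x i := by rw [Algebra.smul_def, ← mul_assoc, hv, one_mul]
  simp [Fintype.sum_prod_type, koszulSyzygies, sub_smul, ite_smul, hvx, hxi]

theorem exists_eq_sum_annihilatorSyzygies_smul (B : Finset R) {b : R} (hb : b ∈ B)
    (hu : IsUnit (algebraMap R A b)) (x : ι → A) :
    ∃ y : ι × B → A, ∀ i, x i = ∑ c, annihilatorSyzygies B i c • y c := by
  classical
  obtain ⟨v, hv⟩ := hu.exists_right_inv
  refine ⟨fun c ↦ if c.2 = ⟨b, hb⟩ then v * x c.1 else 0, fun i ↦ ?_⟩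
  have hxi : b • (v * x i) = x i := by rw [Algebra.smul_def, ← mul_assoc, hv, one_mul]
  simp [Fintype.sum_prod_type, annihilatorSyzygies, ite_smul, hxi]

theorem exists_eq_sum_syzygies_smul_of_isLocalization {f : ι → R} {B : Finset R}
    (p : Ideal R) [p.IsPrime] [IsLocalization.AtPrime A p] (hB : (∀ i, f i ∈ p) → ∃ b ∈ B, b ∉ p)
    {x : ι → A} (hx : ∑ i, f i • x i = 0) :
    ∃ y : (ι × ι) ⊕ (ι × B) → A,
      ∀ i, x i = ∑ c, Sum.elim (koszulSyzygies f i) (annihilatorSyzygies B i) c • y c := by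
  by_cases hf : ∀ i, f i ∈ p
  · obtain ⟨b, hbB, hbp⟩ := hB hf
    obtain ⟨y, hy⟩ := exists_eq_sum_annihilatorSyzygies_smul B hbB
      (IsLocalization.map_units A (⟨b, hbp⟩ : p.primeCompl)) x
    exact ⟨Sum.elim 0 y, fun i ↦ by simp [Fintype.sum_sum_type, hy i]⟩
  · obtain ⟨i₀, hi₀⟩ := not_forall.mp hf
    obtain ⟨y, hy⟩ := exists_eq_sum_koszulSyzygies_smul hx
      (IsLocalization.map_units A (⟨f i₀, hi₀⟩ : p.primeCompl))
    exact ⟨Sum.elim y 0, fun i ↦ by simp [Fintype.sum_sum_type, hy i]⟩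

end Syzygies

theorem isField_localization_atPrime_of_mem_minimalPrimes [IsReduced R] {p : Ideal R}
    [p.IsPrime] (hp : p ∈ minimalPrimes R) : IsField (Localization.AtPrime p) :=
  have : Ring.KrullDimLE 0 (Localization.AtPrime p) := .of_isLocalization _ hp _
  Ring.KrullDimLE.isField_of_isReduced

theorem exists_notMem_forall_mul_eq_zero_of_mem_minimalPrimes [IsReduced R] {p : Ideal R}
    [p.IsPrime] (hp : p ∈ minimalPrimes R) {ι : Type*} [Fintype ι] {f : ι → R}
    (hf : ∀ i, f i ∈ p) : ∃ s ∉ p, ∀ i, s * f i = 0 := by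
  have hmax := IsLocalRing.isField_iff_maximalIdeal_eq.mp
    (isField_localization_atPrime_of_mem_minimalPrimes hp)
  have (i : ι) : ∃ s ∉ p, s * f i = 0 := by
    have hfi : algebraMap R (Localization.AtPrime p) (f i) = 0 := by
      simpa [hmax] using
        (IsLocalization.AtPrime.to_map_mem_maximal_iff (Localization.AtPrime p) p (f i)).mpr (hf i)
    obtain ⟨⟨s, hs⟩, hsf⟩ := (IsLocalization.map_eq_zero_iff p.primeCompl _ _).mp hfi
    exact ⟨s, hs, hsf⟩
  choose s hs hsf using this
  refine ⟨∏ i, s i, fun h ↦ ?_, fun i ↦ ?_⟩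
  · obtain ⟨i, -, hi⟩ := Ideal.IsPrime.prod_mem_iff.mp h
    exact hs i hi
  · obtain ⟨t, ht⟩ := Finset.dvd_prod_of_mem s (Finset.mem_univ i)
    rw [ht, mul_right_comm, hsf, zero_mul]

theorem injective_pi_algebraMap_localization_minimalPrimes [IsReduced R] :
    Function.Injective
      (RingHom.pi fun p : {p : PrimeSpectrum R // p.asIdeal ∈ minimalPrimes R} =>
        algebraMap R (Localization.AtPrime p.1.asIdeal)) := by
  refine (injective_iff_map_eq_zero _).mpr fun r hr ↦ ?_
  have hmem (p : Ideal R) (hp : p ∈ minimalPrimes R) : r ∈ p := by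
    have := hp.1.1
    have hr0 : algebraMap R (Localization.AtPrime p) r = 0 := congrFun hr ⟨⟨p, hp.1.1⟩, hp⟩
    exact (IsLocalization.AtPrime.to_map_mem_maximal_iff (Localization.AtPrime p) p r).mp
      (hr0 ▸ zero_mem _)
  have : r ∈ (⊥ : Ideal R).radical := by
    rw [← Ideal.sInf_minimalPrimes]
    exact Submodule.mem_sInf.mpr hmem
  simpa using this

theorem exists_finset_annihilators_of_isCompact_minimalPrimes [IsReduced R]
    (hcpt : IsCompact {p : PrimeSpectrum R | p.asIdeal ∈ minimalPrimes R})
    {ι : Type*} [Fintype ι] (f : ι → R) :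
    ∃ B : Finset R, (∀ b ∈ B, ∀ i, b * f i = 0) ∧
      ∀ p : PrimeSpectrum R, p.asIdeal ∈ minimalPrimes R → (∀ i, f i ∈ p.asIdeal) →
        ∃ b ∈ B, b ∉ p.asIdeal := by
  have hZ := hcpt.inter_right (PrimeSpectrum.isClosed_zeroLocus (Set.range f))
  obtain ⟨B, hB, hBfin, hcover⟩ := hZ.elim_finite_subcover_image
    (b := {b | ∀ i, b * f i = 0}) (c := fun b ↦ PrimeSpectrum.basicOpen b)
    (fun _ _ ↦ PrimeSpectrum.isOpen_basicOpen) fun p ⟨hp, hpf⟩ ↦ by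
      have := p.isPrime
      obtain ⟨s, hs, hsf⟩ := exists_notMem_forall_mul_eq_zero_of_mem_minimalPrimes hp
        (f := f) (by simpa [Set.range_subset_iff] using hpf)
      exact Set.mem_iUnion₂.mpr ⟨s, hsf, hs⟩
  refine ⟨hBfin.toFinset, fun b hb ↦ hB (hBfin.mem_toFinset.mp hb), fun p hp hpf ↦ ?_⟩
  obtain ⟨b, hb, hpb⟩ := Set.mem_iUnion₂.mp
    (hcover ⟨hp, by simpa [Set.range_subset_iff] using hpf⟩)
  exact ⟨b, hBfin.mem_toFinset.mpr hb, hpb⟩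

theorem flat_pi_localization_minimalPrimes [IsReduced R]
    (hcpt : IsCompact {p : PrimeSpectrum R | p.asIdeal ∈ minimalPrimes R}) :
    Module.Flat R (∀ p : {p : PrimeSpectrum R // p.asIdeal ∈ minimalPrimes R},
      Localization.AtPrime p.1.asIdeal) := by
  refine Module.Flat.pi_of_forall_exists_syzygies fun f ↦ ?_
  obtain ⟨B, hBf, hBcover⟩ := exists_finset_annihilators_of_isCompact_minimalPrimes hcpt f
  refine ⟨_, inferInstance, fun i ↦ Sum.elim (koszulSyzygies f i) (annihilatorSyzygies B i),
    ?_, fun p x hx ↦ exists_eq_sum_syzygies_smul_of_isLocalization _ (hBcover p.1 p.2) hx⟩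
  rintro (c | c)
  · exact sum_mul_koszulSyzygies f c
  · exact sum_mul_annihilatorSyzygies hBf c

end

/-- Let `R` be a reduced commutative ring whose minimal spectrum is quasi-compact in the
Zariski topology. Then the canonical map `π : R → ∏_{p ∈ Min(R)} R_p` is injective and flat,
and each localization `R_p` at a minimal prime `p` is a field. -/
theorem stmt13 {R : Type*} [CommRing R] [IsReduced R]
    (hcpt : IsCompact {p : PrimeSpectrum R | p.asIdeal ∈ minimalPrimes R}) :
    Function.Injective
        (Pi.ringHom fun p : {p : PrimeSpectrum R // p.asIdeal ∈ minimalPrimes R} =>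
          algebraMap R (Localization.AtPrime p.1.asIdeal)) ∧
      RingHom.Flat
        (Pi.ringHom fun p : {p : PrimeSpectrum R // p.asIdeal ∈ minimalPrimes R} =>
          algebraMap R (Localization.AtPrime p.1.asIdeal)) ∧
      ∀ p : PrimeSpectrum R, p.asIdeal ∈ minimalPrimes R →
        IsField (Localization.AtPrime p.asIdeal) :=
  ⟨injective_pi_algebraMap_localization_minimalPrimes,
    RingHom.flat_algebraMap_iff.mpr (flat_pi_localization_minimalPrimes hcpt),
    fun _ hp ↦ isField_localization_atPrime_of_mem_minimalPrimes hp⟩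
end

section
/- Let R be a reduced commutative ring such that Min(R) is quasi-compact with respect to the subspace topology induced from the Zariski topology on Spec(R). Then there exist an absolutely flat commutative ring B and a ring map ψ: R → B which is injective, flat, and an epimorphism of rings. -/
/-!
Call a finite family of elements of `R` a cover if no minimal prime contains all of them. Each
cover `F` gives the flat `R`-algebra `∏ᵢ R_{Fᵢ}`, and `B` is the colimit of these along
refinements `G` of `F` in which each `Gₘ` is divisible by some `Fᵢ` with `Fⱼ Gₘ = 0` for `j < i`;
this `i` is unique unless `Gₘ` is nilpotent, so the transition maps are canonical. An element of a
minimal prime `p` is killed by an element outside `p`, so such refinements exist near each point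
of `Min R`, and quasi-compactness of `Min R` makes them finite; in particular the system is
directed.

Flatness passes to the colimit, and `R → B` is injective because `R` is reduced. Refining so that
each numerator becomes a unit or zero on every member makes `B` absolutely flat. After any
refinement, members over the same `Fᵢ` carry the same fraction `x / s`, and members over different
`Fᵢ` multiply to zero; this gives `b ⊗ 1 = 1 ⊗ b` in `B ⊗[R] B`, so `R → B` is an epimorphism.
-/

universe u v w

open TensorProduct

section MinimalPrimes

variable {R : Type*} [CommRing R] [IsReduced R]

theorem eq_zero_of_forall_mem_minimalPrimes {x : R} (hx : ∀ p ∈ minimalPrimes R, x ∈ p) :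
    x = 0 := by
  have : x ∈ sInf (minimalPrimes R) := Ideal.mem_sInf.mpr fun {p} hp => hx p hp
  rw [minimalPrimes, Ideal.sInf_minimalPrimes, ← Ideal.zero_eq_bot, ← nilradical,
    nilradical_eq_zero] at this
  exact this

theorem exists_notMem_mul_eq_zero_of_mem_minimalPrimes {p : Ideal R} (hp : p ∈ minimalPrimes R)
    {x : R} (hx : x ∈ p) : ∃ y ∉ p, y * x = 0 := by
  have := hp.1.1
  by_contra! hxy
  -- otherwise a prime avoiding the monoid `p.primeCompl * xᴺ` would lie strictly below `p`
  have hdisj : Disjoint ((⊥ : Ideal R) : Set R)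
      (p.primeCompl ⊔ Submonoid.powers x : Submonoid R) := by
    rw [Set.disjoint_left]
    rintro _ h0 hS
    obtain ⟨s, hs, _, ⟨n, rfl⟩, hsx⟩ := Submonoid.mem_sup.mp hS
    have : (s * x) ^ (n + 1) = 0 := by
      rw [show (s * x) ^ (n + 1) = s ^ n * x * (s * x ^ n) by ring, hsx]
      exact mul_eq_zero_of_right _ h0
    exact hxy s hs (IsNilpotent.eq_zero ⟨_, this⟩)
  obtain ⟨q, hq, -, hqS⟩ := Ideal.exists_le_prime_disjoint ⊥ _ hdisj
  have hqp : q ≤ p := fun y hy => by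
    by_contra hyp
    exact Set.disjoint_left.mp hqS hy (Submonoid.mem_sup_left hyp)
  exact Set.disjoint_left.mp hqS (hp.2 ⟨hq, bot_le⟩ hqp hx)
    (Submonoid.mem_sup_right ⟨1, pow_one x⟩)

theorem exists_notMem_mul_eq_zero_or_dvd {p : Ideal R} (hp : p ∈ minimalPrimes R) (x : R) :
    ∃ h ∉ p, x * h = 0 ∨ x ∣ h := by
  by_cases hx : x ∈ p
  · obtain ⟨c, hc, hcx⟩ := exists_notMem_mul_eq_zero_of_mem_minimalPrimes hp hx
    exact ⟨c, hc, .inl (by rw [mul_comm, hcx])⟩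
  · exact ⟨x, hx, .inr dvd_rfl⟩

end MinimalPrimes

theorem exists_eq_sq_mul_of_isUnit_or_eq_zero {M : Type*} [CommMonoidWithZero M] {a : M}
    (ha : IsUnit a ∨ a = 0) : ∃ b, a = a ^ 2 * b := by
  rcases ha with ha | rfl
  · exact ⟨↑ha.unit⁻¹, by rw [pow_two, mul_assoc, ha.mul_val_inv, mul_one]⟩
  · exact ⟨0, by rw [mul_zero]⟩

section TensorProduct

variable {R A B : Type*} [CommSemiring R] [Semiring A] [Algebra R A] [Semiring B] [Algebra R B]

theorem Algebra.TensorProduct.one_tmul_eq_tmul_one_of_mul_eq {a : A} {b : B} {s x : R}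
    (hs : IsUnit (algebraMap R A s)) (ha : a * algebraMap R A s = algebraMap R A x)
    (hb : b * algebraMap R B s = algebraMap R B x) : (1 : A) ⊗ₜ[R] b = a ⊗ₜ[R] 1 := by
  set t : A := ↑hs.unit⁻¹
  have hst : s • t = 1 := by rw [Algebra.smul_def]; exact hs.mul_val_inv
  have hat : a = x • t := by
    rw [Algebra.smul_def, ← ha, mul_assoc, hs.mul_val_inv, mul_one]
  rw [hat, ← hst, TensorProduct.smul_tmul, TensorProduct.smul_tmul, Algebra.smul_def s b,
    Algebra.commutes, hb, Algebra.algebraMap_eq_smul_one]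

theorem Algebra.TensorProduct.subsingleton_of_isUnit_of_eq_zero {r : R}
    (hA : IsUnit (algebraMap R A r)) (hB : algebraMap R B r = 0) : Subsingleton (A ⊗[R] B) := by
  refine subsingleton_of_zero_eq_one (M₀ := A ⊗[R] B) ?_
  rw [Algebra.TensorProduct.one_def, ← hA.mul_val_inv, ← Algebra.smul_def,
    TensorProduct.smul_tmul, Algebra.smul_def, hB, zero_mul, TensorProduct.tmul_zero]

end TensorProduct

theorem Algebra.IsEpi.ringHom_ext {R A C : Type*} [CommRing R] [CommRing A] [Algebra R A]
    [Algebra.IsEpi R A] [CommRing C] {g h : A →+* C}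
    (hgh : g.comp (algebraMap R A) = h.comp (algebraMap R A)) : g = h := by
  let : Algebra R C := (g.comp (algebraMap R A)).toAlgebra
  let g' : A →ₐ[R] C := ⟨g, fun _ => rfl⟩
  let h' : A →ₐ[R] C := ⟨h, fun r => (RingHom.congr_fun hgh r).symm⟩
  ext a
  simpa [g', h'] using (congrArg (Algebra.TensorProduct.lift g' h' fun _ _ => .all _ _)
    ((Algebra.isEpi_iff_forall_one_tmul_eq R A).mp ‹_› a)).symm

section DirectLimit

open Module.DirectLimit

variable {R : Type u} [CommRing R] {ι : Type v} [DecidableEq ι] [Preorder ι] [IsDirectedOrder ι]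
  [Nonempty ι] {G : ι → Type w} [∀ i, AddCommGroup (G i)] [∀ i, Module R (G i)]

theorem Module.Flat.directLimit (f : ∀ i j, i ≤ j → G i →ₗ[R] G j) [DirectedSystem G (f · · ·)]
    [∀ i, Module.Flat R (G i)] : Module.Flat R (Module.DirectLimit G f) := by
  refine Module.Flat.iff_rTensor_preserves_injective_linearMapₛ.{u, u, max v w}.mpr ?_
  intro N N' _ _ _ _ φ hφ
  have rTensor_symm_of : ∀ i (w : N ⊗[R] G i),
      φ.rTensor _ ((directLimitRight f N).symm (of _ _ _ _ i w)) =
        (directLimitRight f N').symm (of _ _ _ _ i (φ.rTensor _ w)) := by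
    intro i w
    induction w using TensorProduct.induction_on with
    | zero => simp
    | tmul n g => simp
    | add u v hu hv => simp_all
  intro z z' hzz'
  obtain ⟨i, w, w', hw, hw'⟩ := exists_of₂ (directLimitRight f N z) (directLimitRight f N z')
  obtain rfl := (directLimitRight f N).eq_symm_apply.mpr hw.symm
  obtain rfl := (directLimitRight f N).eq_symm_apply.mpr hw'.symm
  rw [rTensor_symm_of, rTensor_symm_of] at hzz'
  obtain ⟨j, hij, hj⟩ := exists_eq_of_of_eq ((directLimitRight f N').symm.injective hzz')
  rw [← LinearMap.comp_apply, ← LinearMap.comp_apply, LinearMap.lTensor_comp_rTensor,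
    ← LinearMap.rTensor_comp_lTensor, LinearMap.comp_apply, LinearMap.comp_apply] at hj
  rw [← of_f (hij := hij), Module.Flat.rTensor_preserves_injective_linearMap φ hφ hj, of_f]

end DirectLimit

namespace Localization

variable {R : Type*} [CommRing R]

noncomputable def awayMapOfDvd {a b : R} (hab : a ∣ b) :
    Localization.Away a →ₐ[R] Localization.Away b :=
  IsLocalization.Away.liftAlgHom a (f := Algebra.ofId R _)
    (IsLocalization.Away.isUnit_of_dvd b hab)

theorem isUnit_algebraMap_away_of_mem_powers {a b s : R} (hab : a ∣ b)
    (hs : s ∈ Submonoid.powers a) : IsUnit (algebraMap R (Localization.Away b) s) := by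
  obtain ⟨k, rfl⟩ := hs
  rw [map_pow]
  exact (IsLocalization.Away.isUnit_of_dvd b hab).pow k

theorem awayMapOfDvd_mul_algebraMap {a b s x : R} (hab : a ∣ b) {w : Localization.Away a}
    (hw : w * algebraMap R _ s = algebraMap R _ x) :
    awayMapOfDvd hab w * algebraMap R _ s = algebraMap R _ x := by
  rw [← AlgHom.commutes (awayMapOfDvd hab), ← AlgHom.commutes (awayMapOfDvd hab), ← map_mul, hw]

theorem awayMapOfDvd_isUnit_or_eq_zero {a b x : R} {s : Submonoid.powers a} (hab : a ∣ b)
    {w : Localization.Away a} (hw : w * algebraMap R _ s = algebraMap R _ x)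
    (hx : x * b = 0 ∨ x ∣ b) : IsUnit (awayMapOfDvd hab w) ∨ awayMapOfDvd hab w = 0 := by
  have hw' := awayMapOfDvd_mul_algebraMap hab hw
  rcases hx with hx | hx
  · have hx0 : algebraMap R (Localization.Away b) x = 0 :=
      (IsLocalization.Away.algebraMap_isUnit b).mul_left_eq_zero.mp
        (by rw [← map_mul, hx, map_zero])
    exact .inr ((isUnit_algebraMap_away_of_mem_powers hab s.2).mul_left_eq_zero.mp
      (hw'.trans hx0))
  · exact .inl (isUnit_of_mul_isUnit_left (hw' ▸ IsLocalization.Away.isUnit_of_dvd b hx))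

end Localization

open Localization

abbrev minimalSpectrum (R : Type u) [CommRing R] : Set (PrimeSpectrum R) :=
  {p | p.asIdeal ∈ minimalPrimes R}

structure MinimalCover (R : Type u) [CommRing R] where
  n : ℕ
  elem : Fin n → R
  exists_notMem : ∀ p ∈ minimalPrimes R, ∃ i, elem i ∉ p

namespace MinimalCover

variable {R : Type u} [CommRing R] {F G H : MinimalCover R}

instance : Inhabited (MinimalCover R) :=
  ⟨⟨1, fun _ => 1, fun p hp => ⟨0, (Ideal.ne_top_iff_one p).mp hp.1.1.ne_top⟩⟩⟩

/-- On `D(h)`, the first member of `F` that does not vanish is `F.elem i`. -/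
def Selects (F : MinimalCover R) (i : Fin F.n) (h : R) : Prop :=
  F.elem i ∣ h ∧ ∀ j < i, F.elem j * h = 0

def Refines (G F : MinimalCover R) : Prop :=
  ∀ m, ∃ i, F.Selects i (G.elem m)

theorem Selects.mul_right {i : Fin F.n} {h : R} (hs : F.Selects i h) (c : R) :
    F.Selects i (h * c) :=
  ⟨hs.1.mul_right c, fun j hj => by rw [← mul_assoc, hs.2 j hj, zero_mul]⟩

theorem Selects.trans {i : Fin F.n} {k : Fin G.n} {h : R} (hk : G.Selects k h)
    (hi : F.Selects i (G.elem k)) : F.Selects i h := by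
  obtain ⟨c, hc⟩ := hk.1
  refine ⟨hi.1.trans hk.1, fun j hj => ?_⟩
  rw [hc, ← mul_assoc, hi.2 j hj, zero_mul]

theorem Selects.mul_eq_zero_of_ne {i j : Fin F.n} {h h' : R} (hi : F.Selects i h)
    (hj : F.Selects j h') (hij : i ≠ j) : h * h' = 0 := by
  rcases hij.lt_or_gt with hlt | hlt
  · obtain ⟨c, rfl⟩ := hi.1
    linear_combination c * hj.2 i hlt
  · obtain ⟨c, rfl⟩ := hj.1
    linear_combination c * hi.2 j hlt

theorem Refines.trans (hHG : H.Refines G) (hGF : G.Refines F) : H.Refines F := fun m =>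
  let ⟨k, hk⟩ := hHG m
  let ⟨i, hi⟩ := hGF k
  ⟨i, hk.trans hi⟩

theorem exists_forall_of_exists_notMem [CompactSpace (minimalSpectrum R)] {P : R → Prop}
    (hP : ∀ p ∈ minimalPrimes R, ∃ h ∉ p, P h) : ∃ F : MinimalCover R, ∀ i, P (F.elem i) := by
  obtain ⟨t, ht⟩ := (isCompact_iff_compactSpace.mpr ‹_›).elim_finite_subcover
    (fun h : {h // P h} => (PrimeSpectrum.basicOpen h.1 : Set (PrimeSpectrum R)))
    (fun h => (PrimeSpectrum.basicOpen h.1).isOpen) fun p hp => by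
      obtain ⟨h, hhp, hPh⟩ := hP p.asIdeal hp
      exact Set.mem_iUnion.mpr ⟨⟨h, hPh⟩, hhp⟩
  refine ⟨⟨t.card, fun m => (t.equivFin.symm m).1.1, fun p hp => ?_⟩,
    fun m => (t.equivFin.symm m).1.2⟩
  obtain ⟨h, hht, hph⟩ :=
    Set.mem_iUnion₂.mp (ht (show ⟨p, hp.1.1⟩ ∈ minimalSpectrum R from hp))
  exact ⟨t.equivFin ⟨h, hht⟩, by simpa using hph⟩

abbrev PiAway (F : MinimalCover R) : Type u :=
  Π i, Localization.Away (F.elem i)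

noncomputable def restrict (hGF : G.Refines F) : F.PiAway →ₐ[R] G.PiAway :=
  AlgHom.pi fun m => (awayMapOfDvd (hGF m).choose_spec.1).comp (Pi.evalAlgHom R _ (hGF m).choose)

theorem comp_evalAlgHom_eq_of_selects {h : R} {i j : Fin F.n} (hi : F.Selects i h)
    (hj : F.Selects j h) (φ : Localization.Away (F.elem i) →ₐ[R] Localization.Away h)
    (ψ : Localization.Away (F.elem j) →ₐ[R] Localization.Away h) :
    φ.comp (Pi.evalAlgHom R (fun k => Localization.Away (F.elem k)) i) =
      ψ.comp (Pi.evalAlgHom R _ j) := by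
  obtain rfl | hij := eq_or_ne i j
  · rw [(IsLocalization.algHom_subsingleton (Submonoid.powers (F.elem i))).elim φ ψ]
  · have : Subsingleton (Localization.Away h) :=
      IsLocalization.subsingleton (M := Submonoid.powers h)
        ⟨2, (pow_two h).trans (hi.mul_eq_zero_of_ne hj hij)⟩
    exact AlgHom.ext fun _ => Subsingleton.elim _ _

theorem restrict_apply_of_selects (hGF : G.Refines F) {m : Fin G.n} {i : Fin F.n}
    (hi : F.Selects i (G.elem m)) (y : F.PiAway) : restrict hGF y m = awayMapOfDvd hi.1 (y i) :=
  AlgHom.congr_fun (comp_evalAlgHom_eq_of_selects (hGF m).choose_spec hi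
    (awayMapOfDvd (hGF m).choose_spec.1) (awayMapOfDvd hi.1)) y

theorem restrict_comp_restrict (hHG : H.Refines G) (hGF : G.Refines F) :
    (restrict hHG).comp (restrict hGF) = restrict (hHG.trans hGF) :=
  AlgHom.ext fun y => funext fun m =>
    let hk := (hHG m).choose_spec
    let hi := (hGF (hHG m).choose).choose_spec
    AlgHom.congr_fun (comp_evalAlgHom_eq_of_selects (hk.trans hi) ((hHG.trans hGF) m).choose_spec
      ((awayMapOfDvd hk.1).comp (awayMapOfDvd hi.1))
      (awayMapOfDvd ((hHG.trans hGF) m).choose_spec.1)) y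

theorem one_tmul_restrict (hGF : G.Refines F) (y : F.PiAway) :
    (1 : G.PiAway) ⊗ₜ[R] restrict hGF y = restrict hGF y ⊗ₜ[R] 1 := by
  classical
  have hcomp : ∀ m m', (1 : Localization.Away (G.elem m)) ⊗ₜ[R] restrict hGF y m' =
      restrict hGF y m ⊗ₜ[R] 1 := by
    intro m m'
    obtain ⟨i, hi⟩ := hGF m
    obtain ⟨j, hj⟩ := hGF m'
    rw [restrict_apply_of_selects hGF hi, restrict_apply_of_selects hGF hj]
    obtain rfl | hij := eq_or_ne i j
    · obtain ⟨⟨x, s⟩, hxs⟩ := IsLocalization.surj (Submonoid.powers (F.elem i)) (y i)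
      exact Algebra.TensorProduct.one_tmul_eq_tmul_one_of_mul_eq
        (isUnit_algebraMap_away_of_mem_powers hi.1 s.2) (awayMapOfDvd_mul_algebraMap hi.1 hxs)
        (awayMapOfDvd_mul_algebraMap hj.1 hxs)
    · have hm' : algebraMap R (Localization.Away (G.elem m')) (G.elem m) = 0 :=
        (IsLocalization.Away.algebraMap_isUnit (G.elem m')).mul_right_eq_zero.mp
          (by rw [← map_mul, mul_comm, hi.mul_eq_zero_of_ne hj hij, map_zero])
      have := Algebra.TensorProduct.subsingleton_of_isUnit_of_eq_zero
        (IsLocalization.Away.algebraMap_isUnit (S := Localization.Away (G.elem m)) (G.elem m)) hm'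
      exact Subsingleton.elim _ _
  have hsingle : ∀ m m' (c : Localization.Away (G.elem m)) (d : Localization.Away (G.elem m')),
      (Pi.single m c : G.PiAway) ⊗ₜ[R] (Pi.single m' d : G.PiAway) =
        TensorProduct.map (LinearMap.single R _ m) (LinearMap.single R _ m') (c ⊗ₜ d) :=
    fun _ _ _ _ => rfl
  conv_lhs =>
    rw [← Finset.univ_sum_single (1 : G.PiAway), ← Finset.univ_sum_single (restrict hGF y)]
  conv_rhs =>
    rw [← Finset.univ_sum_single (1 : G.PiAway), ← Finset.univ_sum_single (restrict hGF y)]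
  simp only [TensorProduct.sum_tmul, TensorProduct.tmul_sum, Pi.one_apply, hsingle, hcomp]

variable [IsReduced R]

theorem algebraMap_injective (F : MinimalCover R) :
    Function.Injective (algebraMap R F.PiAway) := by
  refine (injective_iff_map_eq_zero _).mpr fun x hx => eq_zero_of_forall_mem_minimalPrimes
    fun p hp => ?_
  obtain ⟨i, hi⟩ := F.exists_notMem p hp
  obtain ⟨⟨_, n, rfl⟩, hn⟩ :=
    (IsLocalization.map_eq_zero_iff (Submonoid.powers (F.elem i)) _ x).mp (congrFun hx i)
  exact (hp.1.1.mem_or_mem (hn ▸ p.zero_mem)).resolve_left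
    fun h => hi (hp.1.1.mem_of_pow_mem _ h)

theorem exists_selects_notMem (F : MinimalCover R) {p : Ideal R} (hp : p ∈ minimalPrimes R) :
    ∃ h ∉ p, ∃ i, F.Selects i h := by
  have := hp.1.1
  obtain ⟨i, hi, hmin⟩ := wellFounded_lt.has_min {i | F.elem i ∉ p} (F.exists_notMem p hp)
  have hann : ∀ j, ∃ c ∉ p, j < i → c * F.elem j = 0 := fun j => by
    by_cases hj : j < i
    · obtain ⟨c, hc, hcj⟩ := exists_notMem_mul_eq_zero_of_mem_minimalPrimes hp
        (not_not.mp fun h => hmin j h hj)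
      exact ⟨c, hc, fun _ => hcj⟩
    · exact ⟨1, (Ideal.ne_top_iff_one p).mp this.ne_top, fun h => absurd h hj⟩
  choose c hcp hc using hann
  refine ⟨F.elem i * ∏ j, c j, fun hmem => ?_, i, dvd_mul_right _ _, fun j hj => ?_⟩
  · rcases this.mem_or_mem hmem with h | h
    · exact hi h
    · obtain ⟨j, -, hj⟩ := Ideal.IsPrime.prod_mem_iff.mp h
      exact hcp j hj
  · rw [← Finset.mul_prod_erase _ _ (Finset.mem_univ j)]
    linear_combination (F.elem i * ∏ k ∈ Finset.univ.erase j, c k) * hc j hj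

variable [CompactSpace (minimalSpectrum R)]

theorem exists_refines_refines (F G : MinimalCover R) :
    ∃ H : MinimalCover R, H.Refines F ∧ H.Refines G := by
  obtain ⟨H, hH⟩ := exists_forall_of_exists_notMem
    (P := fun h => (∃ i, F.Selects i h) ∧ ∃ k, G.Selects k h) fun p hp => by
      obtain ⟨h, hhp, i, hi⟩ := F.exists_selects_notMem hp
      obtain ⟨h', hh'p, k, hk⟩ := G.exists_selects_notMem hp
      exact ⟨h * h', hp.1.1.mul_notMem hhp hh'p, ⟨i, hi.mul_right h'⟩,
        ⟨k, mul_comm h' h ▸ hk.mul_right h⟩⟩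
  exact ⟨H, fun m => (hH m).1, fun m => (hH m).2⟩

theorem exists_refines_isUnit_or_eq_zero (y : F.PiAway) :
    ∃ (G : MinimalCover R) (hGF : G.Refines F),
      ∀ m, IsUnit (restrict hGF y m) ∨ restrict hGF y m = 0 := by
  choose xs hxs using fun i => IsLocalization.surj (Submonoid.powers (F.elem i)) (y i)
  obtain ⟨G, hG⟩ := exists_forall_of_exists_notMem
    (P := fun h => ∃ i, F.Selects i h ∧ ((xs i).1 * h = 0 ∨ (xs i).1 ∣ h)) fun p hp => by
      obtain ⟨h, hhp, i, hi⟩ := F.exists_selects_notMem hp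
      obtain ⟨h', hh'p, hx⟩ := exists_notMem_mul_eq_zero_or_dvd hp (xs i).1
      refine ⟨h * h', hp.1.1.mul_notMem hhp hh'p, i, hi.mul_right h', ?_⟩
      exact hx.imp (fun hx => by rw [mul_left_comm, hx, mul_zero]) fun hx => hx.mul_left h
  choose i hi hx using hG
  have hGF : G.Refines F := fun m => ⟨i m, hi m⟩
  refine ⟨G, hGF, fun m => ?_⟩
  rw [restrict_apply_of_selects hGF (hi m)]
  exact awayMapOfDvd_isUnit_or_eq_zero (hi m).1 (hxs (i m)) (hx m)

end MinimalCover

open MinimalCover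

/-- Covers tagged with a level. The levels make `≤` strict off the diagonal, so that composing
two restriction maps never has to give an identity. -/
def AbsolutelyFlatHull.Index (R : Type u) [CommRing R] : Type u :=
  MinimalCover R × ℕ

namespace AbsolutelyFlatHull.Index

variable {R : Type u} [CommRing R]

instance : Preorder (Index R) where
  le a b := a = b ∨ b.1.Refines a.1 ∧ a.2 < b.2
  le_refl _ := .inl rfl
  le_trans a b c := by
    rintro (rfl | ⟨hba, hab⟩) (rfl | ⟨hcb, hbc⟩)
    exacts [.inl rfl, .inr ⟨hcb, hbc⟩, .inr ⟨hba, hab⟩, .inr ⟨hcb.trans hba, hab.trans hbc⟩]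

instance : Nonempty (Index R) :=
  ⟨(default, 0)⟩

open Classical in
noncomputable def transition (a b : Index R) (hab : a ≤ b) : a.1.PiAway →ₐ[R] b.1.PiAway :=
  if e : a = b then e ▸ AlgHom.id R _ else restrict (hab.resolve_left e).1

theorem transition_of_ne {a b : Index R} (hab : a ≤ b) (hne : a ≠ b) :
    transition a b hab = restrict (hab.resolve_left hne).1 :=
  dif_neg hne

instance : DirectedSystem (fun a : Index R => a.1.PiAway) (transition · · ·) where
  map_self a y := by simp [transition]
  map_map {c b a} hab hbc y := by
    obtain rfl | hab' := eq_or_ne a b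
    · simp [transition]
    obtain rfl | hbc' := eq_or_ne b c
    · simp [transition]
    have hac : a ≠ c := by
      rintro rfl
      exact ((hab.resolve_left hab').2.trans (hbc.resolve_left hbc').2).false
    rw [transition_of_ne _ hab', transition_of_ne _ hbc', transition_of_ne _ hac,
      ← AlgHom.comp_apply, restrict_comp_restrict]

instance [IsReduced R] [CompactSpace (minimalSpectrum R)] : IsDirectedOrder (Index R) where
  directed a b :=
    let ⟨H, hHa, hHb⟩ := a.1.exists_refines_refines b.1
    ⟨(H, max a.2 b.2 + 1), .inr ⟨hHa, by omega⟩, .inr ⟨hHb, by omega⟩⟩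

end AbsolutelyFlatHull.Index

abbrev AbsolutelyFlatHull (R : Type u) [CommRing R] [IsReduced R]
    [CompactSpace (minimalSpectrum R)] : Type u :=
  DirectLimit (fun a : AbsolutelyFlatHull.Index R => a.1.PiAway)
    AbsolutelyFlatHull.Index.transition

namespace AbsolutelyFlatHull

variable {R : Type u} [CommRing R] [IsReduced R] [CompactSpace (minimalSpectrum R)]

open Classical in
instance : Module.Flat R (AbsolutelyFlatHull R) := by
  let f a b h := (Index.transition (R := R) a b h).toLinearMap
  have : DirectedSystem (fun a : Index R => a.1.PiAway) (f · · ·) :=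
    inferInstanceAs (DirectedSystem _ (Index.transition · · ·))
  have := Module.Flat.directLimit f
  exact .of_linearEquiv (Module.DirectLimit.linearEquiv _ f).symm

noncomputable abbrev of (a : Index R) : a.1.PiAway →ₐ[R] AbsolutelyFlatHull R :=
  DirectLimit.Algebra.of _ Index.transition a

theorem exists_of (b : AbsolutelyFlatHull R) : ∃ a y, of a y = b := by
  obtain ⟨a, y, rfl⟩ := DirectLimit.exists_eq_mk _ b
  exact ⟨a, y, rfl⟩

theorem of_restrict {a : Index R} {G : MinimalCover R} (hGa : G.Refines a.1) (y : a.1.PiAway) :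
    of (G, a.2 + 1) (restrict hGa y) = of a y := by
  have hle : a ≤ (G, a.2 + 1) := .inr ⟨hGa, a.2.lt_succ_self⟩
  have hne : a ≠ (G, a.2 + 1) := fun h => by simpa using congrArg Prod.snd h
  rw [← DirectLimit.Algebra.of_f hle, Index.transition_of_ne hle hne]

theorem algebraMap_injective : Function.Injective (algebraMap R (AbsolutelyFlatHull R)) := by
  refine (injective_iff_map_eq_zero _).mpr fun x hx => ?_
  rw [← (of ((default, 0) : Index R)).commutes] at hx
  obtain ⟨b, _, hb⟩ := (DirectLimit.exists_eq_zero _).mp hx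
  rw [AlgHom.commutes] at hb
  exact b.1.algebraMap_injective (hb.trans (map_zero _).symm)

theorem exists_eq_sq_mul (b : AbsolutelyFlatHull R) : ∃ c, b = b ^ 2 * c := by
  obtain ⟨a, y, rfl⟩ := exists_of b
  obtain ⟨G, hGa, hG⟩ := a.1.exists_refines_isUnit_or_eq_zero y
  choose z hz using fun m => exists_eq_sq_mul_of_isUnit_or_eq_zero (hG m)
  refine ⟨of (G, a.2 + 1) z, ?_⟩
  rw [← of_restrict hGa, ← map_pow, ← map_mul]
  exact congrArg _ (funext hz)

instance : Algebra.IsEpi R (AbsolutelyFlatHull R) :=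
  (Algebra.isEpi_iff_forall_one_tmul_eq R _).mpr fun b => by
    obtain ⟨a, y, rfl⟩ := exists_of b
    obtain ⟨G, hGa, -⟩ := a.1.exists_refines_refines a.1
    rw [← of_restrict hGa]
    simpa using congrArg (Algebra.TensorProduct.map (of (G, a.2 + 1)) (of (G, a.2 + 1)))
      (one_tmul_restrict hGa y)

end AbsolutelyFlatHull

/-- Let `R` be a reduced commutative ring whose minimal spectrum is quasi-compact in the
Zariski topology. Then there exist an absolutely flat commutative ring `B` and a ring map
`ψ : R → B` which is injective, flat, and an epimorphism of rings. -/
theorem stmt14 {R : Type u} [CommRing R] [IsReduced R]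
    (hcpt : IsCompact {p : PrimeSpectrum R | p.asIdeal ∈ minimalPrimes R}) :
    ∃ (B : Type u) (_ : CommRing B) (ψ : R →+* B),
      (∀ b : B, ∃ c : B, b = b ^ 2 * c) ∧
      Function.Injective ψ ∧ ψ.Flat ∧
      (∀ (C : Type u) [CommRing C] (g h : B →+* C), g.comp ψ = h.comp ψ → g = h) := by
  have := isCompact_iff_compactSpace.mp hcpt
  exact ⟨AbsolutelyFlatHull R, inferInstance, algebraMap R _, AbsolutelyFlatHull.exists_eq_sq_mul,
    AbsolutelyFlatHull.algebraMap_injective, RingHom.flat_algebraMap_iff.mpr inferInstance,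
    fun C _ g h => Algebra.IsEpi.ringHom_ext⟩
end

section
/- Let R be a reduced commutative ring. Then a prime ideal q of the polynomial ring R[x] is a minimal prime of R[x] if and only if q = p[x] (the extension of p to R[x], i.e., the ideal of polynomials all of whose coefficients lie in p) for some minimal prime p of R. -/
/-!
`C : R → R[X]` has the left inverse `constantCoeff`, so `p ↦ p[x]` is a section of
`q ↦ q ∩ R` on ideals and sends primes to primes. A prime `q` of `R[x]` contains
`(q ∩ R)[x]`, hence contains `p[x]` for a minimal prime `p ⊆ q ∩ R`; minimality then
transfers in both directions by contracting back to `R`.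
-/

open Polynomial

theorem Ideal.comap_map_of_leftInverse {R S : Type*} [CommSemiring R] [CommSemiring S]
    {f : R →+* S} {g : S →+* R} (h : Function.LeftInverse g f) (I : Ideal R) :
    (I.map f).comap f = I :=
  le_antisymm (fun x hx ↦ h x ▸ Ideal.map_le_comap_of_inverse f g I h hx) Ideal.le_comap_map

namespace Polynomial

variable {R : Type*} [CommRing R]

theorem comap_C_map_C (p : Ideal R) : (p.map (C : R →+* R[X])).comap C = p :=
  Ideal.comap_map_of_leftInverse (g := constantCoeff) (fun r ↦ by simp) p

theorem map_C_mem_minimalPrimes {p : Ideal R} (hp : p ∈ minimalPrimes R) :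
    p.map (C : R →+* R[X]) ∈ minimalPrimes R[X] := by
  rw [minimalPrimes_eq_minimals] at hp ⊢
  have := hp.prop
  refine ⟨Ideal.isPrime_map_C_of_isPrime, fun q hq hqp ↦ ?_⟩
  have hcomap : q.comap C ≤ p := comap_C_map_C p ▸ Ideal.comap_mono hqp
  have hpq : p ≤ q.comap C := hp.le_of_le (Ideal.comap_isPrime C q) hcomap
  exact (Ideal.map_mono hpq).trans Ideal.map_comap_le

theorem exists_eq_map_C_of_mem_minimalPrimes {q : Ideal R[X]} (hq : q ∈ minimalPrimes R[X]) :
    ∃ p ∈ minimalPrimes R, q = p.map C := by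
  rw [minimalPrimes_eq_minimals] at hq
  have := hq.prop
  obtain ⟨p, hp, hpq⟩ := Ideal.exists_minimalPrimes_le (J := q.comap C) bot_le
  have hle : p.map C ≤ q := (Ideal.map_mono hpq).trans Ideal.map_comap_le
  have := hp.1.1
  exact ⟨p, hp, le_antisymm (hq.le_of_le Ideal.isPrime_map_C_of_isPrime hle) hle⟩

end Polynomial

theorem stmt15_general {R : Type*} [CommRing R]
    (q : Ideal (Polynomial R)) :
    q ∈ minimalPrimes (Polynomial R) ↔
      ∃ p ∈ minimalPrimes R, q = Ideal.map (Polynomial.C : R →+* Polynomial R) p :=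
  ⟨exists_eq_map_C_of_mem_minimalPrimes, fun ⟨_, hp, hq⟩ ↦ hq ▸ map_C_mem_minimalPrimes hp⟩

/-- Let `R` be a reduced commutative ring. A prime ideal `q` of `R[x]` is a minimal prime
of `R[x]` if and only if `q = p[x]` (the extension of `p` along `R → R[x]`, i.e. the ideal
of polynomials all of whose coefficients lie in `p`) for some minimal prime `p` of `R`. -/
theorem stmt15 {R : Type*} [CommRing R] [IsReduced R]
    (q : Ideal (Polynomial R)) (hq : q.IsPrime) :
    q ∈ minimalPrimes (Polynomial R) ↔
      ∃ p ∈ minimalPrimes R, q = Ideal.map (Polynomial.C : R →+* Polynomial R) p :=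
  stmt15_general q
end

section
/- Let φ: R → A be an injective flat ring map between commutative rings. Then the induced map φ*: Spec(A) → Spec(R), q ↦ φ⁻¹(q), maps Min(A) onto Min(R); consequently, if Min(A) is quasi-compact in the Zariski topology of Spec(A), then Min(R) is quasi-compact in the Zariski topology of Spec(R). -/
/-!
Flat maps satisfy going down, so `comap φ` lifts generizations and hence sends minimal primes
to minimal primes. Conversely, when `φ` is injective every minimal prime `p` of `R` is the
contraction of some prime `q` of `A`; a minimal prime `q₀ ≤ q` then contracts to a prime
below `p`, which by minimality is `p` itself. Compactness passes to the image under the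
continuous map `comap φ`.
-/

section Order

variable {α β : Type*} [Preorder α] [PartialOrder β] {f : α → β}

theorem Relation.Fibration.isMin_apply (hf : Relation.Fibration (· ≤ ·) (· ≤ ·) f)
    (hmono : Monotone f) {a : α} (ha : IsMin a) : IsMin (f a) := by
  intro b hb
  obtain ⟨a', ha'a, rfl⟩ := hf hb
  exact hmono (ha ha'a)

theorem IsMin.eq_apply_of_le (hmono : Monotone f) {a a₀ : α} (hfa : IsMin (f a))
    (ha₀ : a₀ ≤ a) : f a₀ = f a :=
  (hmono ha₀).antisymm (hfa (hmono ha₀))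

end Order

namespace PrimeSpectrum

variable {R A : Type*} [CommRing R] [CommRing A] {φ : R →+* A}

theorem comap_monotone (φ : R →+* A) : Monotone (comap φ) :=
  fun _ _ h ↦ Ideal.comap_mono h

theorem exists_isMin_le (q : PrimeSpectrum A) : ∃ q₀, IsMin q₀ ∧ q₀ ≤ q := by
  obtain ⟨q₀, hq₀, hle⟩ := Ideal.exists_minimalPrimes_le (I := ⊥) (J := q.asIdeal) bot_le
  exact ⟨⟨q₀, hq₀.1.1⟩, isMin_iff.mpr hq₀, hle⟩

/-- Going down for flat maps, in the form "generizations lift along `comap φ`". -/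
theorem fibration_comap_of_flat (hflat : φ.Flat) :
    Relation.Fibration (· ≤ ·) (· ≤ ·) (comap φ) := by
  intro q p hp
  obtain ⟨q', hq'q, hq'p⟩ :=
    RingHom.Flat.generalizingMap_comap hflat ((le_iff_specializes p _).mp hp)
  exact ⟨q', (le_iff_specializes q' q).mpr hq'q, hq'p⟩

theorem isMin_comap_of_flat (hflat : φ.Flat) {q : PrimeSpectrum A} (hq : IsMin q) :
    IsMin (comap φ q) :=
  (fibration_comap_of_flat hflat).isMin_apply (comap_monotone φ) hq

theorem exists_comap_eq_of_isMin_of_injective (hinj : Function.Injective φ)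
    {p : PrimeSpectrum R} (hp : IsMin p) : ∃ q : PrimeSpectrum A, comap φ q = p := by
  obtain ⟨q, hq, hqp⟩ :=
    Ideal.exists_comap_eq_of_mem_minimalPrimes_of_injective hinj p.asIdeal (isMin_iff.mp hp)
  exact ⟨⟨q, hq⟩, PrimeSpectrum.ext hqp⟩

theorem image_comap_setOf_isMin_of_flat_of_injective (hflat : φ.Flat)
    (hinj : Function.Injective φ) :
    comap φ '' {q : PrimeSpectrum A | IsMin q} = {p : PrimeSpectrum R | IsMin p} := by
  refine subset_antisymm (Set.image_subset_iff.mpr fun q ↦ isMin_comap_of_flat hflat) ?_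
  intro p hp
  obtain ⟨q, rfl⟩ := exists_comap_eq_of_isMin_of_injective hinj hp
  obtain ⟨q₀, hq₀, hq₀q⟩ := exists_isMin_le q
  exact ⟨q₀, hq₀, hp.eq_apply_of_le (comap_monotone φ) hq₀q⟩

end PrimeSpectrum

/-- Let `φ : R → A` be an injective flat ring map. Then the induced map
`φ* : Spec A → Spec R` maps `Min(A)` onto `Min(R)`; consequently, if `Min(A)` is
quasi-compact in the Zariski topology, then so is `Min(R)`. -/
theorem stmt17 {R A : Type*} [CommRing R] [CommRing A] (φ : R →+* A)
    (hinj : Function.Injective φ) (hflat : φ.Flat) :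
    PrimeSpectrum.comap φ '' {q : PrimeSpectrum A | q.asIdeal ∈ minimalPrimes A} =
        {p : PrimeSpectrum R | p.asIdeal ∈ minimalPrimes R} ∧
      (IsCompact {q : PrimeSpectrum A | q.asIdeal ∈ minimalPrimes A} →
        IsCompact {p : PrimeSpectrum R | p.asIdeal ∈ minimalPrimes R}) := by
  have himage := PrimeSpectrum.image_comap_setOf_isMin_of_flat_of_injective hflat hinj
  simp only [PrimeSpectrum.isMin_iff] at himage
  refine ⟨himage, fun hcompact ↦ ?_⟩
  rw [← himage]
  exact hcompact.image (PrimeSpectrum.continuous_comap φ)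
end
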